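/- arXiv:1512.09039 — 5 statements merged into one kernel-verified Lean document; each statement's English description precedes it below -/
import Mathlib

section
/- Almost sure convergence of the differentially private Laplacian consensus algorithm: Consider n agents executing θ(k+1) = θ(k) − h L x(k) + S η(k), x(k) = θ(k) + η(k), with the stated graph, step size, gain, and Laplace-noise assumptions. Define the random variable θ_∞ = ⟨θ₀⟩ + Σ_{i=1}^n (s_i/n) Σ_{j=0}^∞ η_i(j) (set θ_∞ = ⟨θ₀⟩ on the event where some series Σ_{j=0}^∞ η_i(j) fails to converge). Then θ_∞ is well defined almost surely (i.e., almost surely every series Σ_{j=0}^∞ η_i(j) converges), and almost surely θ(k) → θ_∞·𝟏_n as k → ∞. -/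
/-!
Since `𝟏ᵀL = 0`, the average `⟨θ(k)⟩` moves only by `⟨Sη(k)⟩`, so it converges to `θ_∞` as soon
as every series `∑ⱼ ηᵢ(j)` converges, and these converge almost surely by Borel–Cantelli. The
disagreement `θ(k) - ⟨θ(k)⟩𝟏` stays in `𝟏^⊥`, where connectivity gives a spectral gap
`μ ‖v‖² ≤ vᵀLv`; together with `‖Lv‖² ≤ 2 d_max vᵀLv` and `h d_max < 1` this makes `I - hL` a
strict contraction of `𝟏^⊥` in the Euclidean norm. The disagreement is driven through this
contraction by an input that tends to zero, hence tends to zero.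
-/

open MeasureTheory ProbabilityTheory Filter

/-- The Laplace distribution on `ℝ` with scale `b`, given by the density
`x ↦ (1/(2b)) exp(-|x|/b)` with respect to Lebesgue measure. -/
noncomputable def lap (b : ℝ) : Measure ℝ :=
  volume.withDensity fun x => ENNReal.ofReal ((2 * b)⁻¹ * Real.exp (-|x| / b))

/-- The average `⟨v⟩ = (1/n) 𝟏ᵀ v` of the components of a vector. -/
noncomputable def ave {n : ℕ} (v : Fin n → ℝ) : ℝ := (∑ i, v i) / n

/-- The state trajectory of the dynamics `θ(k+1) = θ(k) - h L x(k) + S η(k)` with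
messages `x(k) = θ(k) + η(k)`, initial state `θ0` and noise sequence `η`. -/
noncomputable def thetaSeq {n : ℕ} (L S : Matrix (Fin n) (Fin n) ℝ) (h : ℝ)
    (θ0 : Fin n → ℝ) (η : ℕ → Fin n → ℝ) : ℕ → Fin n → ℝ
  | 0 => θ0
  | k + 1 =>
      thetaSeq L S h θ0 η k - h • L.mulVec (thetaSeq L S h θ0 η k + η k)
        + S.mulVec (η k)

open scoped Classical in
/-- The convergence point `θ_∞ = ⟨θ₀⟩ + ∑_{i=1}^n (s_i/n) ∑_{j=0}^∞ η_i(j)`,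
set to `⟨θ₀⟩` on the event where some series `∑_{j=0}^∞ η_i(j)` fails to converge. -/
noncomputable def thetaInf {n : ℕ} (θ0 : Fin n → ℝ) (s : Fin n → ℝ)
    (η : ℕ → Fin n → ℝ) : ℝ :=
  if ∀ i, Summable (fun j => η j i) then
    ave θ0 + ∑ i, (s i / n) * ∑' j, η j i
  else ave θ0

open scoped Topology
open Matrix

lemma lap_apply_Ioi {b : ℝ} (hb : 0 < b) {t : ℝ} (ht : 0 ≤ t) :
    lap b (Set.Ioi t) = ENNReal.ofReal (Real.exp (-t / b) / 2) := by
  have hab : -b⁻¹ < 0 := neg_lt_zero.2 (inv_pos.2 hb)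
  rw [lap, withDensity_apply _ measurableSet_Ioi,
    setLIntegral_congr_fun measurableSet_Ioi (g := fun x => ENNReal.ofReal
      ((2 * b)⁻¹ * Real.exp (-b⁻¹ * x))) fun x hx => by
        dsimp only; rw [abs_of_pos (ht.trans_lt hx), neg_div, div_eq_inv_mul, neg_mul],
    ← ofReal_integral_eq_lintegral_ofReal ((integrableOn_exp_mul_Ioi hab t).const_mul _)
      (ae_of_all _ fun x => by positivity),
    integral_const_mul, integral_exp_mul_Ioi hab]
  congr 1
  field_simp

lemma lap_apply_Iic {b : ℝ} (hb : 0 < b) {t : ℝ} (ht : 0 ≤ t) :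
    lap b (Set.Iic (-t)) = ENNReal.ofReal (Real.exp (-t / b) / 2) := by
  have hab : 0 < b⁻¹ := inv_pos.2 hb
  rw [lap, withDensity_apply _ measurableSet_Iic,
    setLIntegral_congr_fun measurableSet_Iic (g := fun x => ENNReal.ofReal
      ((2 * b)⁻¹ * Real.exp (b⁻¹ * x))) fun x hx => by
        rw [abs_of_nonpos (hx.out.trans (neg_nonpos.2 ht)), neg_neg, div_eq_inv_mul],
    ← ofReal_integral_eq_lintegral_ofReal ((integrableOn_exp_mul_Iic hab _).const_mul _)
      (ae_of_all _ fun x => by positivity),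
    integral_const_mul, integral_exp_mul_Iic hab]
  congr 1
  field_simp

lemma lap_setOf_lt_abs_le {b : ℝ} (hb : 0 < b) {t : ℝ} (ht : 0 ≤ t) :
    lap b {x | t < |x|} ≤ ENNReal.ofReal (Real.exp (-t / b)) :=
  calc lap b {x | t < |x|} ≤ lap b (Set.Iic (-t) ∪ Set.Ioi t) :=
        measure_mono fun x hx => by
          rcases lt_abs.1 hx.out with h | h
          exacts [Or.inr h, Or.inl (le_neg_of_le_neg h.le)]
    _ ≤ lap b (Set.Iic (-t)) + lap b (Set.Ioi t) := measure_union_le _ _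
    _ = ENNReal.ofReal (Real.exp (-t / b)) := by
        rw [lap_apply_Iic hb ht, lap_apply_Ioi hb ht,
          ← ENNReal.ofReal_add (by positivity) (by positivity), add_halves]

lemma lap_setOf_lt_abs_le_div {b : ℝ} (hb : 0 < b) {t : ℝ} (ht : 0 < t) :
    lap b {x | t < |x|} ≤ ENNReal.ofReal (b / t) := by
  refine (lap_setOf_lt_abs_le hb ht.le).trans (ENNReal.ofReal_le_ofReal ?_)
  have hx : 0 < t / b := div_pos ht hb
  calc Real.exp (-t / b) = (Real.exp (t / b))⁻¹ := by rw [← Real.exp_neg, neg_div]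
    _ ≤ (t / b)⁻¹ := inv_anti₀ hx ((Real.add_one_le_exp _).trans' (by linarith))
    _ = b / t := inv_div _ _

lemma ae_summable_of_tsum_measure_lt_abs_ne_top {Ω : Type*} [MeasurableSpace Ω] {μ : Measure Ω}
    {X : ℕ → Ω → ℝ} {t : ℕ → ℝ} (ht : Summable t)
    (hX : ∑' k, μ {ω | t k < |X k ω|} ≠ ⊤) :
    ∀ᵐ ω ∂μ, Summable fun k => X k ω := by
  filter_upwards [ae_eventually_notMem hX] with ω hω
  exact ht.of_norm_bounded_eventually_nat (hω.mono fun k hk => not_lt.1 hk)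

lemma ae_summable_of_map_eq_lap {Ω : Type*} [MeasurableSpace Ω] {μ : Measure Ω}
    {X : ℕ → Ω → ℝ} (hX : ∀ k, Measurable (X k)) {c q : ℝ} (hc : 0 < c) (hq0 : 0 < q)
    (hq1 : q < 1) (hlaw : ∀ k, μ.map (X k) = lap (c * q ^ k)) :
    ∀ᵐ ω ∂μ, Summable fun k => X k ω := by
  -- thresholds `√q ^ k` are summable while `P(|X k| > √q ^ k) ≤ c q ^ k / √q ^ k = c √q ^ k`
  set r := Real.sqrt q
  have hr0 : 0 < r := Real.sqrt_pos.2 hq0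
  have hr1 : r < 1 := by simpa using Real.sqrt_lt_sqrt hq0.le hq1
  have hq : q = r ^ 2 := (Real.sq_sqrt hq0.le).symm
  have hgeom := summable_geometric_of_lt_one hr0.le hr1
  refine ae_summable_of_tsum_measure_lt_abs_ne_top hgeom ?_
  have htail : ∀ k, μ {ω | r ^ k < |X k ω|} ≤ ENNReal.ofReal (c * r ^ k) := fun k => by
    rw [show {ω | r ^ k < |X k ω|} = X k ⁻¹' {x | r ^ k < |x|} from rfl,
      ← Measure.map_apply (hX k) (measurableSet_lt measurable_const measurable_abs), hlaw]
    refine (lap_setOf_lt_abs_le_div (by positivity) (by positivity)).trans_eq ?_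
    rw [hq, ← pow_mul, mul_comm 2, pow_mul, sq]
    field_simp
  refine ne_top_of_le_ne_top ?_ (ENNReal.tsum_le_tsum htail)
  rw [← ENNReal.ofReal_tsum_of_nonneg (fun k => by positivity) (hgeom.mul_left c)]
  exact ENNReal.ofReal_ne_top

lemma exists_pos_mul_norm_sq_le_of_pos {E : Type*} [NormedAddCommGroup E] [NormedSpace ℝ E]
    [FiniteDimensional ℝ E] (K : Submodule ℝ E) {Q : E → ℝ} (hQ : Continuous Q)
    (hQ_smul : ∀ (c : ℝ) x, Q (c • x) = c ^ 2 * Q x) (hQ_pos : ∀ x ∈ K, x ≠ 0 → 0 < Q x) :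
    ∃ μ > 0, ∀ x ∈ K, μ * ‖x‖ ^ 2 ≤ Q x := by
  have hcpt : IsCompact (Metric.sphere (0 : E) 1 ∩ K) :=
    (isCompact_sphere 0 1).inter_right K.closed_of_finiteDimensional
  obtain ⟨μ, hμ, hμQ⟩ := hcpt.exists_forall_le' hQ.continuousOn fun x hx =>
    hQ_pos x hx.2 (ne_zero_of_mem_sphere one_ne_zero ⟨x, hx.1⟩)
  refine ⟨μ, hμ, fun x hxK => ?_⟩
  rcases eq_or_ne x 0 with rfl | hx0
  · have hQ0 : Q 0 = 0 := by simpa using hQ_smul 0 0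
    simp [hQ0]
  have hx : 0 < ‖x‖ := norm_pos_iff.2 hx0
  have hμx := hμQ (‖x‖⁻¹ • x) ⟨by simp [norm_smul, hx.ne'], K.smul_mem _ hxK⟩
  rw [hQ_smul] at hμx
  calc μ * ‖x‖ ^ 2 ≤ ‖x‖⁻¹ ^ 2 * Q x * ‖x‖ ^ 2 := by gcongr
    _ = Q x := by field_simp

lemma Matrix.IsSymm.sum_sum_mul_swap {ι α : Type*} [Fintype ι] [AddCommMonoid α] [Mul α]
    {A : Matrix ι ι α} (hA : A.IsSymm) (g : ι → ι → α) :
    ∑ i, ∑ j, A i j * g j i = ∑ i, ∑ j, A i j * g i j := by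
  rw [Finset.sum_comm]
  simp_rw [hA.apply]

lemma norm_toLp_sq {ι : Type*} [Fintype ι] (v : ι → ℝ) :
    ‖WithLp.toLp 2 v‖ ^ 2 = ∑ i, v i ^ 2 := by
  simp [EuclideanSpace.norm_sq_eq]

lemma tendsto_zero_iff_norm_toLp_tendsto_zero {ι α : Type*} [Fintype ι] {l : Filter α}
    {f : α → ι → ℝ} : Tendsto f l (𝓝 0) ↔ Tendsto (fun a => ‖WithLp.toLp 2 (f a)‖) l (𝓝 0) := by
  rw [← tendsto_zero_iff_norm_tendsto_zero]
  exact ⟨fun hf => by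
      simpa [Function.comp_def] using ((PiLp.continuous_toLp 2 _).tendsto 0).comp hf,
    fun hf => by
      simpa [Function.comp_def] using ((PiLp.continuous_ofLp 2 _).tendsto 0).comp hf⟩

section Laplacian

variable {ι : Type*} [Fintype ι] [DecidableEq ι]

def laplacian (A : Matrix ι ι ℝ) : Matrix ι ι ℝ := diagonal (fun i => ∑ j, A i j) - A

lemma laplacian_mulVec_apply (A : Matrix ι ι ℝ) (v : ι → ℝ) (i : ι) :
    (laplacian A *ᵥ v) i = ∑ j, A i j * (v i - v j) := by
  rw [laplacian, sub_mulVec, Pi.sub_apply, mulVec_diagonal, Finset.sum_mul, mulVec, dotProduct,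
    ← Finset.sum_sub_distrib]
  simp only [mul_sub]

lemma laplacian_mulVec_const (A : Matrix ι ι ℝ) (a : ℝ) : laplacian A *ᵥ (fun _ => a) = 0 := by
  ext i
  simp [laplacian_mulVec_apply]

variable {A : Matrix ι ι ℝ}

lemma sum_laplacian_mulVec (hA : A.IsSymm) (v : ι → ℝ) : ∑ i, (laplacian A *ᵥ v) i = 0 := by
  have hswap := hA.sum_sum_mul_swap fun i j => v i - v j
  have hneg : ∑ i, ∑ j, A i j * (v j - v i) = -∑ i, ∑ j, A i j * (v i - v j) := by
    simp only [← Finset.sum_neg_distrib, ← mul_neg, neg_sub]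
  simp only [laplacian_mulVec_apply]
  linarith

lemma dotProduct_laplacian_mulVec (hA : A.IsSymm) (v : ι → ℝ) :
    v ⬝ᵥ (laplacian A *ᵥ v) = (∑ i, ∑ j, A i j * (v i - v j) ^ 2) / 2 := by
  have hswap := hA.sum_sum_mul_swap fun i j => v i * (v i - v j)
  have hsq : ∑ i, ∑ j, A i j * (v i - v j) ^ 2
      = ∑ i, ∑ j, A i j * (v i * (v i - v j)) + ∑ i, ∑ j, A i j * (v j * (v j - v i)) := by
    simp only [← Finset.sum_add_distrib]
    exact Finset.sum_congr rfl fun i _ => Finset.sum_congr rfl fun j _ => by ring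
  have hdot : v ⬝ᵥ (laplacian A *ᵥ v) = ∑ i, ∑ j, A i j * (v i * (v i - v j)) := by
    simp only [dotProduct, laplacian_mulVec_apply, Finset.mul_sum]
    exact Finset.sum_congr rfl fun i _ => Finset.sum_congr rfl fun j _ => by ring
  rw [hdot, hsq, hswap]
  ring

lemma dotProduct_laplacian_mulVec_nonneg (hA : A.IsSymm) (hA₀ : ∀ i j, 0 ≤ A i j)
    (v : ι → ℝ) : 0 ≤ v ⬝ᵥ (laplacian A *ᵥ v) := by
  rw [dotProduct_laplacian_mulVec hA]
  exact div_nonneg (Finset.sum_nonneg fun i _ => Finset.sum_nonneg fun j _ =>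
    mul_nonneg (hA₀ i j) (sq_nonneg _)) zero_le_two

lemma laplacian_mulVec_eq_zero (hA : A.IsSymm) (hA₀ : ∀ i j, 0 ≤ A i j) {v : ι → ℝ}
    (hv : v ⬝ᵥ (laplacian A *ᵥ v) = 0) : laplacian A *ᵥ v = 0 := by
  have hterm : ∀ i j, A i j * (v i - v j) ^ 2 = 0 := by
    rw [dotProduct_laplacian_mulVec hA, div_eq_zero_iff, or_iff_left two_ne_zero,
      Finset.sum_eq_zero_iff_of_nonneg fun i _ => Finset.sum_nonneg fun j _ =>
        mul_nonneg (hA₀ i j) (sq_nonneg _)] at hv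
    exact fun i j => (Finset.sum_eq_zero_iff_of_nonneg fun j _ =>
      mul_nonneg (hA₀ i j) (sq_nonneg _)).1 (hv i (Finset.mem_univ _)) j (Finset.mem_univ _)
  ext i
  rw [laplacian_mulVec_apply, Pi.zero_apply]
  refine Finset.sum_eq_zero fun j _ => pow_eq_zero_iff two_ne_zero |>.1 ?_
  rw [mul_pow, sq (A i j), mul_assoc, hterm, mul_zero]

lemma sum_sq_laplacian_mulVec_le (hA : A.IsSymm) (hA₀ : ∀ i j, 0 ≤ A i j) {d : ℝ}
    (hd : ∀ i, ∑ j, A i j ≤ d) (v : ι → ℝ) :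
    ∑ i, (laplacian A *ᵥ v) i ^ 2 ≤ 2 * d * (v ⬝ᵥ (laplacian A *ᵥ v)) := by
  -- Cauchy–Schwarz with weights `A i j` in each row
  have hrow : ∀ i, (laplacian A *ᵥ v) i ^ 2 ≤ d * ∑ j, A i j * (v i - v j) ^ 2 := fun i => by
    rw [laplacian_mulVec_apply]
    refine (Finset.sum_sq_le_sum_mul_sum_of_sq_le_mul _ (r := fun j => A i j * (v i - v j))
      (f := fun j => A i j) (g := fun j => A i j * (v i - v j) ^ 2)
      (fun j _ => hA₀ i j) (fun j _ => mul_nonneg (hA₀ i j) (sq_nonneg _))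
      fun j _ => le_of_eq (by ring)).trans ?_
    exact mul_le_mul_of_nonneg_right (hd i)
      (Finset.sum_nonneg fun j _ => mul_nonneg (hA₀ i j) (sq_nonneg _))
  rw [dotProduct_laplacian_mulVec hA]
  refine (Finset.sum_le_sum fun i _ => hrow i).trans_eq ?_
  rw [← Finset.mul_sum]
  ring

lemma exists_pos_mul_norm_sq_le_dotProduct_laplacian (hA : A.IsSymm) (hA₀ : ∀ i j, 0 ≤ A i j)
    (hconn : ∀ v, laplacian A *ᵥ v = 0 → ∃ a : ℝ, v = fun _ => a) :
    ∃ μ > 0, ∀ v : ι → ℝ, ∑ i, v i = 0 →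
      μ * ‖WithLp.toLp 2 v‖ ^ 2 ≤ v ⬝ᵥ (laplacian A *ᵥ v) := by
  obtain ⟨μ, hμ, hμQ⟩ := exists_pos_mul_norm_sq_le_of_pos (ℝ ∙ WithLp.toLp 2 (1 : ι → ℝ))ᗮ
    (Q := fun x : EuclideanSpace ℝ ι => x.ofLp ⬝ᵥ (laplacian A *ᵥ x.ofLp)) (by fun_prop)
    (fun c x => by simp only [WithLp.ofLp_smul, mulVec_smul, smul_dotProduct, dotProduct_smul,
      smul_eq_mul]; ring)
    fun x hx hx0 => by
      refine (dotProduct_laplacian_mulVec_nonneg hA hA₀ _).lt_of_ne fun hQ => hx0 ?_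
      obtain ⟨a, ha⟩ := hconn _ (laplacian_mulVec_eq_zero hA hA₀ hQ.symm)
      have hx1 : x ∈ ℝ ∙ WithLp.toLp 2 (1 : ι → ℝ) :=
        Submodule.mem_span_singleton.2 ⟨a, by ext i; simp [ha]⟩
      simpa using (Submodule.inf_orthogonal_eq_bot _).le ⟨hx1, hx⟩
  refine ⟨μ, hμ, fun v hv => hμQ (WithLp.toLp 2 v) ?_⟩
  simpa [Submodule.mem_orthogonal_singleton_iff_inner_right,
    EuclideanSpace.inner_eq_star_dotProduct, dotProduct] using hv

lemma exists_norm_sub_smul_laplacian_mulVec_le (hA : A.IsSymm) (hA₀ : ∀ i j, 0 ≤ A i j)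
    (hconn : ∀ v, laplacian A *ᵥ v = 0 → ∃ a : ℝ, v = fun _ => a) {h d : ℝ} (hh : 0 < h)
    (hd : ∀ i, ∑ j, A i j ≤ d) (hhd : h * d < 1) :
    ∃ ρ, 0 ≤ ρ ∧ ρ < 1 ∧ ∀ v : ι → ℝ, ∑ i, v i = 0 →
      ‖WithLp.toLp 2 (v - h • laplacian A *ᵥ v)‖ ≤ ρ * ‖WithLp.toLp 2 v‖ := by
  obtain ⟨μ, hμ, hgap⟩ := exists_pos_mul_norm_sq_le_dotProduct_laplacian hA hA₀ hconn
  have hκ : 0 < 2 * h * (1 - h * d) := by nlinarith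
  refine ⟨√(max (1 - 2 * h * (1 - h * d) * μ) 0), Real.sqrt_nonneg _, ?_, fun v hv => ?_⟩
  · rw [Real.sqrt_lt' one_pos, one_pow, max_lt_iff]
    constructor <;> nlinarith
  refine (pow_le_pow_iff_left₀ (norm_nonneg _) (by positivity) two_ne_zero).1 ?_
  have hQ := dotProduct_laplacian_mulVec_nonneg hA hA₀ v
  have hLv := sum_sq_laplacian_mulVec_le hA hA₀ hd v
  have hμv := hgap v hv
  rw [norm_toLp_sq] at hμv
  rw [mul_pow, Real.sq_sqrt (le_max_right _ _), norm_toLp_sq, norm_toLp_sq]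
  have hexp : ∑ i, (v - h • laplacian A *ᵥ v) i ^ 2 = ∑ i, v i ^ 2
      - 2 * h * (v ⬝ᵥ (laplacian A *ᵥ v)) + h ^ 2 * ∑ i, (laplacian A *ᵥ v) i ^ 2 := by
    simp only [Pi.sub_apply, Pi.smul_apply, smul_eq_mul, dotProduct, Finset.mul_sum,
      ← Finset.sum_sub_distrib, ← Finset.sum_add_distrib]
    exact Finset.sum_congr rfl fun i _ => by ring
  calc ∑ i, (v - h • laplacian A *ᵥ v) i ^ 2
      ≤ ∑ i, v i ^ 2 - 2 * h * (1 - h * d) * (v ⬝ᵥ (laplacian A *ᵥ v)) := by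
        rw [hexp]; nlinarith
    _ ≤ (1 - 2 * h * (1 - h * d) * μ) * ∑ i, v i ^ 2 := by nlinarith
    _ ≤ max (1 - 2 * h * (1 - h * d) * μ) 0 * ∑ i, v i ^ 2 := by
        gcongr
        exact le_max_left _ _

end Laplacian

lemma tendsto_zero_of_le_mul_add {x u : ℕ → ℝ} {ρ : ℝ} (hρ0 : 0 ≤ ρ) (hρ1 : ρ < 1)
    (hx : ∀ k, 0 ≤ x k) (hrec : ∀ k, x (k + 1) ≤ ρ * x k + u k)
    (hu : Tendsto u atTop (𝓝 0)) : Tendsto x atTop (𝓝 0) := by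
  refine tendsto_order.2 ⟨fun a ha => .of_forall fun k => ha.trans_le (hx k), fun a ha => ?_⟩
  obtain ⟨K, hK⟩ := eventually_atTop.1
    (hu.eventually (gt_mem_nhds (mul_pos (sub_pos.2 hρ1) (half_pos ha))))
  -- past `K`, the excess of `x` over `a / 2` contracts by `ρ` at every step
  have hexcess : ∀ m, x (K + m) - a / 2 ≤ ρ ^ m * x K := fun m => by
    induction m with
    | zero => simp; linarith
    | succ m ih =>
      calc x (K + m + 1) - a / 2 ≤ ρ * (x (K + m) - a / 2) := by
            linarith [hrec (K + m), hK (K + m) (Nat.le_add_right K m)]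
        _ ≤ ρ ^ (m + 1) * x K := by
            rw [pow_succ', mul_assoc]; exact mul_le_mul_of_nonneg_left ih hρ0
  have hpow : Tendsto (fun m => ρ ^ m * x K) atTop (𝓝 0) := by
    simpa using (tendsto_pow_atTop_nhds_zero_of_lt_one hρ0 hρ1).mul_const (x K)
  obtain ⟨M, hM⟩ := eventually_atTop.1 (hpow.eventually (gt_mem_nhds (half_pos ha)))
  refine eventually_atTop.2 ⟨K + M, fun k hk => ?_⟩
  obtain ⟨m, rfl⟩ := Nat.exists_eq_add_of_le (le_of_add_le_left hk)
  linarith [hexcess m, hM m (by omega)]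

section Consensus

variable {n : ℕ}

noncomputable def disagreement (v : Fin n → ℝ) : Fin n → ℝ := v - fun _ => ave v

lemma sum_disagreement (v : Fin n → ℝ) : ∑ i, disagreement v i = 0 := by
  rcases Nat.eq_zero_or_pos n with rfl | hn
  · simp
  simp only [disagreement, Pi.sub_apply]
  rw [Finset.sum_sub_distrib, Finset.sum_const, Finset.card_univ, Fintype.card_fin, nsmul_eq_mul,
    ave, mul_div_cancel₀ _ (by positivity), sub_self]

variable {A : Matrix (Fin n) (Fin n) ℝ} {h : ℝ} {S : Matrix (Fin n) (Fin n) ℝ}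
  {θ0 : Fin n → ℝ} {η : ℕ → Fin n → ℝ}

lemma ave_thetaSeq_succ (hA : A.IsSymm) (k : ℕ) :
    ave (thetaSeq (laplacian A) S h θ0 η (k + 1))
      = ave (thetaSeq (laplacian A) S h θ0 η k) + ave (S *ᵥ η k) := by
  simp only [ave, thetaSeq, Pi.add_apply, Pi.sub_apply, Pi.smul_apply, smul_eq_mul,
    Finset.sum_add_distrib, Finset.sum_sub_distrib, ← Finset.mul_sum, sum_laplacian_mulVec hA,
    mul_zero, sub_zero, add_div]

lemma disagreement_thetaSeq_succ (hA : A.IsSymm) (k : ℕ) :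
    disagreement (thetaSeq (laplacian A) S h θ0 η (k + 1))
      = disagreement (thetaSeq (laplacian A) S h θ0 η k)
          - h • laplacian A *ᵥ disagreement (thetaSeq (laplacian A) S h θ0 η k)
        + (disagreement (S *ᵥ η k) - h • laplacian A *ᵥ η k) := by
  rw [disagreement, ave_thetaSeq_succ hA, disagreement, mulVec_sub, laplacian_mulVec_const,
    sub_zero, thetaSeq, mulVec_add, disagreement]
  ext i
  simp only [Pi.add_apply, Pi.sub_apply, Pi.smul_apply, smul_eq_mul]
  ring

lemma tendsto_ave_thetaSeq (hA : A.IsSymm) (s : Fin n → ℝ) (hη : ∀ i, Summable fun j => η j i) :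
    Tendsto (fun k => ave (thetaSeq (laplacian A) (diagonal s) h θ0 η k)) atTop
      (𝓝 (thetaInf θ0 s η)) := by
  have hpartial : ∀ k, ave (thetaSeq (laplacian A) (diagonal s) h θ0 η k)
      = ave θ0 + ∑ j ∈ Finset.range k, ∑ i, s i / n * η j i := fun k => by
    induction k with
    | zero => simp [thetaSeq]
    | succ k ih =>
      rw [ave_thetaSeq_succ hA, ih, Finset.sum_range_succ, add_assoc]
      simp only [ave, mulVec_diagonal, Finset.sum_div, div_mul_eq_mul_div]
  have hsum : HasSum (fun j => ∑ i, s i / n * η j i) (∑ i, s i / n * ∑' j, η j i) :=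
    hasSum_sum fun i _ => (hη i).hasSum.mul_left _
  rw [thetaInf, if_pos hη]
  simpa only [hpartial] using tendsto_const_nhds.add hsum.tendsto_sum_nat

theorem tendsto_thetaSeq (hA : A.IsSymm) (hA₀ : ∀ i j, 0 ≤ A i j)
    (hconn : ∀ v, laplacian A *ᵥ v = 0 → ∃ a : ℝ, v = fun _ => a) {d : ℝ} (hh : 0 < h)
    (hd : ∀ i, ∑ j, A i j ≤ d) (hhd : h * d < 1) (s : Fin n → ℝ)
    (hη : ∀ i, Summable fun j => η j i) :
    Tendsto (thetaSeq (laplacian A) (diagonal s) h θ0 η) atTop (𝓝 fun _ => thetaInf θ0 s η) := by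
  set θ := thetaSeq (laplacian A) (diagonal s) h θ0 η
  set w : (Fin n → ℝ) → Fin n → ℝ := fun v => disagreement (diagonal s *ᵥ v) - h • laplacian A *ᵥ v
  have hw : Tendsto (fun k => w (η k)) atTop (𝓝 0) := by
    have hcont : Continuous w := by unfold w disagreement ave; fun_prop
    have hw0 : w 0 = 0 := by ext; simp [w, disagreement, ave]
    have := (hcont.tendsto 0).comp (tendsto_pi_nhds.2 fun i => (hη i).tendsto_atTop_zero)
    rwa [hw0] at this
  obtain ⟨ρ, hρ0, hρ1, hρ⟩ := exists_norm_sub_smul_laplacian_mulVec_le hA hA₀ hconn hh hd hhd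
  have hrec : ∀ k, ‖WithLp.toLp 2 (disagreement (θ (k + 1)))‖
      ≤ ρ * ‖WithLp.toLp 2 (disagreement (θ k))‖ + ‖WithLp.toLp 2 (w (η k))‖ := fun k => by
    rw [disagreement_thetaSeq_succ hA k, WithLp.toLp_add]
    exact (norm_add_le _ _).trans (add_le_add_left (hρ _ (sum_disagreement (θ k))) _)
  have hδ : Tendsto (fun k => disagreement (θ k)) atTop (𝓝 0) :=
    tendsto_zero_iff_norm_toLp_tendsto_zero.2 <|
      tendsto_zero_of_le_mul_add hρ0 hρ1 (fun k => norm_nonneg _) hrec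
        (tendsto_zero_iff_norm_toLp_tendsto_zero.1 hw)
  have havg := tendsto_ave_thetaSeq (h := h) (θ0 := θ0) hA s hη
  have hlim := hδ.add (tendsto_pi_nhds.2 fun _ => havg :
    Tendsto (fun k (_ : Fin n) => ave (θ k)) atTop (𝓝 fun _ => thetaInf θ0 s η))
  rw [zero_add] at hlim
  exact hlim.congr fun k => sub_add_cancel (θ k) _

end Consensus

theorem almost_sure_convergence_general {n : ℕ} (hn : 0 < n)
    (A : Matrix (Fin n) (Fin n) ℝ) (hAsymm : A.IsSymm) (hApos : ∀ i j, 0 ≤ A i j)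
    (L : Matrix (Fin n) (Fin n) ℝ)
    (hL : L = Matrix.diagonal (fun i => ∑ j, A i j) - A)
    (hconn : ∀ v : Fin n → ℝ, L.mulVec v = 0 → ∃ a : ℝ, v = fun _ => a)
    (h : ℝ) (hh0 : 0 < h)
    (hh1 : h < 1 / Finset.univ.sup'
      (Finset.univ_nonempty_iff.mpr (Fin.pos_iff_nonempty.mp hn)) (fun i => ∑ j, A i j))
    (s c q : Fin n → ℝ)
    (hc : ∀ i, 0 < c i) (hq : ∀ i, q i ∈ Set.Ioo (|s i - 1|) 1)
    (P : Measure (ℕ → Fin n → ℝ)) [IsProbabilityMeasure P]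
    (hlaw : ∀ (k : ℕ) (i : Fin n),
      Measure.map (fun ω : ℕ → Fin n → ℝ => ω k i) P = lap (c i * q i ^ k))
    (θ0 : Fin n → ℝ) :
    P {ω | ∀ i, Summable fun j => ω j i} = 1 ∧
    ∀ᵐ ω ∂P, Tendsto (fun k => thetaSeq L (Matrix.diagonal s) h θ0 ω k)
      atTop (nhds (fun _ => thetaInf θ0 s ω)) := by
  subst hL
  set d := Finset.univ.sup' _ fun i => ∑ j, A i j
  have hd : ∀ i, ∑ j, A i j ≤ d := fun i => Finset.le_sup' (fun i => ∑ j, A i j) (Finset.mem_univ i)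
  have hhd : h * d < 1 := (lt_div_iff₀ (one_div_pos.1 (hh0.trans hh1))).1 hh1
  have hsum : ∀ᵐ ω ∂P, ∀ i, Summable fun j => ω j i := ae_all_iff.2 fun i =>
    ae_summable_of_map_eq_lap (μ := P) (X := fun k ω => ω k i) (fun k => by fun_prop) (hc i)
      ((abs_nonneg _).trans_lt (hq i).1) (hq i).2 (hlaw · i)
  refine ⟨(measure_congr (ae_eq_univ.2 (ae_iff.1 hsum))).trans measure_univ, ?_⟩
  filter_upwards [hsum] with ω hω
  exact tendsto_thetaSeq hAsymm hApos hconn hh0 hd hhd s hω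

/-- **Almost sure convergence of the differentially private Laplacian consensus
algorithm.** Almost surely every series `∑_{j=0}^∞ η_i(j)` converges (so that `θ_∞`
is well defined a.s.), and almost surely `θ(k) → θ_∞ 𝟏` as `k → ∞`. -/
theorem almost_sure_convergence {n : ℕ} (hn : 0 < n)
    (A : Matrix (Fin n) (Fin n) ℝ) (hAsymm : A.IsSymm) (hApos : ∀ i j, 0 ≤ A i j)
    (L : Matrix (Fin n) (Fin n) ℝ)
    (hL : L = Matrix.diagonal (fun i => ∑ j, A i j) - A)
    (hconn : ∀ v : Fin n → ℝ, L.mulVec v = 0 → ∃ a : ℝ, v = fun _ => a)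
    (h : ℝ) (hh0 : 0 < h)
    (hh1 : h < 1 / Finset.univ.sup'
      (Finset.univ_nonempty_iff.mpr (Fin.pos_iff_nonempty.mp hn)) (fun i => ∑ j, A i j))
    (s c q : Fin n → ℝ) (hs : ∀ i, s i ∈ Set.Ioo (0 : ℝ) 2)
    (hc : ∀ i, 0 < c i) (hq : ∀ i, q i ∈ Set.Ioo (|s i - 1|) 1)
    (P : Measure (ℕ → Fin n → ℝ)) [IsProbabilityMeasure P]
    (hlaw : ∀ (k : ℕ) (i : Fin n),
      Measure.map (fun ω : ℕ → Fin n → ℝ => ω k i) P = lap (c i * q i ^ k))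
    (hind : iIndepFun
      (fun (p : ℕ × Fin n) (ω : ℕ → Fin n → ℝ) => ω p.1 p.2) P)
    (θ0 : Fin n → ℝ) :
    P {ω | ∀ i, Summable fun j => ω j i} = 1 ∧
    ∀ᵐ ω ∂P, Tendsto (fun k => thetaSeq L (Matrix.diagonal s) h θ0 ω k)
      atTop (nhds (fun _ => thetaInf θ0 s ω)) :=
  almost_sure_convergence_general hn A hAsymm hApos L hL hconn h hh0 hh1 s c q hc hq P hlaw θ0
end

section
/- Unbiasedness and variance of the consensus value: Under the differentially private Laplacian consensus dynamics with the stated assumptions, the convergence point θ_∞ = ⟨θ₀⟩ + Σ_{i=1}^n (s_i/n) Σ_{j=0}^∞ η_i(j) satisfies E[θ_∞] = ⟨θ₀⟩ and var{θ_∞} = (2/n²) Σ_{i=1}^n s_i² c_i² / (1 − q_i²). -/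
/-!
On the event where every agent's noise series converges, `θ_∞ - ⟨θ₀⟩` is the sum of the
family `(s_i / n) η_i(j)` of independent centred variables. A `Lap(b)` variable has standard
deviation `√2 b`, so here the standard deviations decay geometrically and the family is
summable in `L²`; its `L²` sum agrees a.e. with the pointwise sum. Independent centred variables
are orthogonal in `L²`, so the sum has mean `0` and variance `∑ (s_i / n)² 2 c_i² q_i^(2j)`,
which is `(2/n²) ∑ s_i² c_i² / (1 - q_i²)`.
-/

open MeasureTheory ProbabilityTheory Filter

open Real
open scoped ENNReal Nat

section Laplace

variable {b : ℝ}

lemma integral_abs_pow_mul_exp_neg_abs_div (hb : 0 < b) (k : ℕ) :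
    ∫ x : ℝ, |x| ^ k * exp (-|x| / b) = 2 * (b ^ (k + 1) * k !) := by
  rw [integral_comp_abs (f := fun t ↦ t ^ k * exp (-t / b))]
  have h := integral_rpow_mul_exp_neg_mul_Ioi (a := (k : ℝ) + 1) (r := b⁻¹)
    (by positivity) (inv_pos.2 hb)
  rw [setIntegral_congr_fun measurableSet_Ioi
      (g := fun t : ℝ ↦ t ^ ((k : ℝ) + 1 - 1) * exp (-(b⁻¹ * t)))
      (fun x _ ↦ by simp only [add_sub_cancel_right, rpow_natCast]; ring_nf), h,
    one_div, inv_inv, Gamma_nat_eq_factorial, ← Nat.cast_add_one, rpow_natCast]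

lemma integral_lap (hb : 0 < b) (f : ℝ → ℝ) :
    ∫ x, f x ∂lap b = ∫ x, (2 * b)⁻¹ * exp (-|x| / b) * f x := by
  rw [lap, integral_withDensity_eq_integral_toReal_smul (by fun_prop)
    (.of_forall fun _ ↦ ENNReal.ofReal_lt_top)]
  congr 1 with x
  rw [ENNReal.toReal_ofReal (by positivity), smul_eq_mul]

lemma integral_id_lap (hb : 0 < b) : ∫ x, x ∂lap b = 0 := by
  set g : ℝ → ℝ := fun x ↦ (2 * b)⁻¹ * exp (-|x| / b) * x
  have hodd : ∫ x, g x = -∫ x, g x := by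
    conv_lhs => rw [← integral_neg_eq_self]
    simp only [g, abs_neg, mul_neg, integral_neg]
  rw [integral_lap hb]
  linarith

lemma integral_sq_lap (hb : 0 < b) : ∫ x, x ^ 2 ∂lap b = 2 * b ^ 2 := by
  have h : ∀ x : ℝ, (2 * b)⁻¹ * exp (-|x| / b) * x ^ 2
      = (2 * b)⁻¹ * (|x| ^ 2 * exp (-|x| / b)) := fun x ↦ by rw [sq_abs]; ring
  simp only [integral_lap hb, h, integral_const_mul, integral_abs_pow_mul_exp_neg_abs_div hb]
  norm_num [Nat.factorial]
  field_simp

lemma memLp_id_lap (hb : 0 < b) : MemLp id 2 (lap b) :=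
  (memLp_two_iff_integrable_sq aestronglyMeasurable_id).2 <|
    .of_integral_ne_zero <| by simp [integral_sq_lap hb, hb.ne']

lemma variance_id_lap (hb : 0 < b) : Var[id; lap b] = 2 * b ^ 2 := by
  rw [variance_of_integral_eq_zero aemeasurable_id (integral_id_lap hb)]
  exact integral_sq_lap hb

end Laplace

section IndependentSeries

variable {Ω ι : Type*} [MeasurableSpace Ω] {P : Measure Ω} {X : ι → Ω → ℝ}

lemma inner_toLp_toLp {Y Z : Ω → ℝ} (hY : MemLp Y 2 P) (hZ : MemLp Z 2 P) :
    inner ℝ (hY.toLp Y) (hZ.toLp Z) = ∫ ω, Y ω * Z ω ∂P := by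
  rw [L2.inner_def]
  refine integral_congr_ae ?_
  filter_upwards [hY.coeFn_toLp, hZ.coeFn_toLp] with ω hYω hZω
  simp only [hYω, hZω, RCLike.inner_apply, conj_trivial, mul_comm]

lemma norm_toLp_eq_sqrt_variance {Y : Ω → ℝ} (hY : MemLp Y 2 P) (hmean : P[Y] = 0) :
    ‖hY.toLp Y‖ = √(Var[Y; P]) := by
  rw [norm_eq_sqrt_real_inner, inner_toLp_toLp,
    variance_of_integral_eq_zero hY.aestronglyMeasurable.aemeasurable hmean]
  simp only [sq]

variable (hX : ∀ i, MemLp (X i) 2 P) (hmean : ∀ i, P[X i] = 0)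
  (hσ : Summable fun i ↦ √(Var[X i; P]))
include hX hmean hσ

lemma summable_norm_toLp : Summable fun i ↦ ‖(hX i).toLp (X i)‖ := by
  simpa only [norm_toLp_eq_sqrt_variance (hX _) (hmean _)] using hσ

variable [Countable ι]

lemma ae_hasSum_tsum_toLp :
    ∀ᵐ ω ∂P, HasSum (fun i ↦ X i ω) ((∑' i, (hX i).toLp (X i)) ω) := by
  have hnorm : ∑' i, ‖(hX i).toLp (X i)‖ₑ ≠ ∞ :=
    tsum_enorm_ne_top_iff_summable_norm.2 (summable_norm_toLp hX hmean hσ)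
  filter_upwards [Lp.hasSum_coeFn_tsum hnorm, ae_all_iff.2 fun i ↦ (hX i).coeFn_toLp]
    with ω hsum hcoe
  simpa only [hcoe] using hsum

lemma ae_summable_of_summable_sqrt_variance : ∀ᵐ ω ∂P, Summable fun i ↦ X i ω :=
  (ae_hasSum_tsum_toLp hX hmean hσ).mono fun _ h ↦ h.summable

lemma tsum_ae_eq_tsum_toLp :
    (fun ω ↦ ∑' i, X i ω) =ᵐ[P] ⇑(∑' i, (hX i).toLp (X i)) :=
  (ae_hasSum_tsum_toLp hX hmean hσ).mono fun _ h ↦ h.tsum_eq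

lemma memLp_tsum : MemLp (fun ω ↦ ∑' i, X i ω) 2 P :=
  (Lp.memLp _).ae_eq (tsum_ae_eq_tsum_toLp hX hmean hσ).symm

lemma integral_tsum_eq_zero [IsFiniteMeasure P] : P[fun ω ↦ ∑' i, X i ω] = 0 := by
  set f := fun i ↦ (hX i).toLp (X i)
  set one := indicatorConstLp 2 MeasurableSet.univ (measure_ne_top P Set.univ) (1 : ℝ)
  have hinner : ∀ g : Lp ℝ 2 P, inner ℝ one g = ∫ ω, g ω ∂P := fun g ↦ by
    rw [L2.inner_indicatorConstLp_one, setIntegral_univ]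
  have hsum := (innerSL ℝ one).hasSum (summable_norm_toLp hX hmean hσ).of_norm.hasSum
  simp only [innerSL_apply_apply, hinner] at hsum
  have hterm : ∀ i, ∫ ω, f i ω ∂P = 0 := fun i ↦
    (integral_congr_ae (hX i).coeFn_toLp).trans (hmean i)
  rw [integral_congr_ae (tsum_ae_eq_tsum_toLp hX hmean hσ), ← hsum.tsum_eq]
  exact (tsum_congr hterm).trans tsum_zero

lemma variance_tsum_eq_tsum_variance [IsProbabilityMeasure P]
    (hindep : Pairwise fun i j ↦ IndepFun (X i) (X j) P) :
    Var[fun ω ↦ ∑' i, X i ω; P] = ∑' i, Var[X i; P] := by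
  set f := fun i ↦ (hX i).toLp (X i)
  set F := ∑' i, f i
  have hf : HasSum f F := (summable_norm_toLp hX hmean hσ).of_norm.hasSum
  have hdiag : ∀ i, inner ℝ (f i) (f i) = Var[X i; P] := fun i ↦ by
    rw [inner_toLp_toLp,
      variance_of_integral_eq_zero (hX i).aestronglyMeasurable.aemeasurable (hmean i)]
    simp only [sq]
  have horth : ∀ i j, i ≠ j → inner ℝ (f i) (f j) = 0 := fun i j hij ↦ by
    rw [inner_toLp_toLp, (hindep hij).integral_fun_mul_eq_mul_integral
      (hX i).aestronglyMeasurable (hX j).aestronglyMeasurable, hmean i, zero_mul]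
  have hfF : ∀ i, inner ℝ F (f i) = Var[X i; P] := fun i ↦ by
    have h := (innerSL ℝ (f i)).hasSum hf
    simp only [innerSL_apply_apply] at h
    rw [real_inner_comm, ← h.tsum_eq, tsum_eq_single i fun j hji ↦ horth i j hji.symm, hdiag]
  have hFF : inner ℝ F F = ∑' i, Var[X i; P] := by
    have h := (innerSL ℝ F).hasSum hf
    simp only [innerSL_apply_apply, hfF] at h
    exact h.tsum_eq.symm
  have hmeanF : P[F] = 0 := by
    rw [← integral_congr_ae (tsum_ae_eq_tsum_toLp hX hmean hσ)]
    exact integral_tsum_eq_zero hX hmean hσ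
  rw [variance_congr (tsum_ae_eq_tsum_toLp hX hmean hσ),
    variance_of_integral_eq_zero (Lp.aestronglyMeasurable F).aemeasurable hmeanF, ← hFF,
    L2.inner_def]
  simp only [sq, RCLike.inner_apply, conj_trivial]

end IndependentSeries

lemma hasSum_prod_mul_geometric {ι : Type*} [Fintype ι] (A : ι → ℝ) {r : ι → ℝ}
    (hr0 : ∀ i, 0 ≤ r i) (hr1 : ∀ i, r i < 1) :
    HasSum (fun p : ι × ℕ ↦ A p.1 * r p.1 ^ p.2) (∑ i, A i * (1 - r i)⁻¹) := by
  have hgeom : ∀ i, Summable fun j : ℕ ↦ r i ^ j := fun i ↦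
    summable_geometric_of_lt_one (hr0 i) (hr1 i)
  have hsum : Summable fun p : ι × ℕ ↦ A p.1 * r p.1 ^ p.2 := by
    refine Summable.of_norm ((summable_prod_of_nonneg fun _ ↦ norm_nonneg _).2
      ⟨fun i ↦ ?_, .of_finite⟩)
    simpa only [norm_mul, norm_pow, Real.norm_eq_abs, abs_of_nonneg (hr0 i)] using
      (hgeom i).mul_left |A i|
  convert hsum.hasSum using 1
  rw [hsum.tsum_prod, tsum_fintype]
  simp only [tsum_mul_left, tsum_geometric_of_lt_one (hr0 _) (hr1 _)]

section LaplaceNoise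

variable {n : ℕ} {c q : Fin n → ℝ} {P : Measure (ℕ → Fin n → ℝ)}

-- Indexed by (agent, time), so that the fibres of `Fin n × ℕ` are the agents' noise series.
def weightedNoise (a : Fin n → ℝ) (p : Fin n × ℕ) (ω : ℕ → Fin n → ℝ) : ℝ :=
  a p.1 * ω p.2 p.1

lemma pairwise_indepFun_weightedNoise
    (hind : iIndepFun (fun (p : ℕ × Fin n) (ω : ℕ → Fin n → ℝ) ↦ ω p.1 p.2) P)
    (a : Fin n → ℝ) :
    Pairwise fun p p' ↦ IndepFun (weightedNoise a p) (weightedNoise a p') P := by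
  intro p p' hpp'
  have hne : (p.2, p.1) ≠ (p'.2, p'.1) := fun h ↦ hpp' (Prod.ext (congrArg Prod.snd h)
    (congrArg Prod.fst h))
  exact (hind.indepFun hne).comp (measurable_const_mul (a p.1)) (measurable_const_mul (a p'.1))

variable (hlaw : ∀ (k : ℕ) (i : Fin n),
    Measure.map (fun ω : ℕ → Fin n → ℝ ↦ ω k i) P = lap (c i * q i ^ k))
include hlaw

lemma hasLaw_coord (k : ℕ) (i : Fin n) :
    HasLaw (fun ω : ℕ → Fin n → ℝ ↦ ω k i) (lap (c i * q i ^ k)) P :=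
  ⟨(measurable_pi_apply k).eval.aemeasurable, hlaw k i⟩

variable (hc : ∀ i, 0 < c i) (hq0 : ∀ i, 0 < q i)
include hc hq0

lemma memLp_weightedNoise (a : Fin n → ℝ) (p : Fin n × ℕ) : MemLp (weightedNoise a p) 2 P := by
  have hb : 0 < c p.1 * q p.1 ^ p.2 := mul_pos (hc _) (pow_pos (hq0 _) _)
  have h := memLp_id_lap hb
  rw [← hlaw] at h
  exact ((memLp_map_measure_iff aestronglyMeasurable_id
    (hasLaw_coord hlaw _ _).aemeasurable).1 h).const_mul _

lemma integral_weightedNoise (a : Fin n → ℝ) (p : Fin n × ℕ) : P[weightedNoise a p] = 0 := by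
  have hb : 0 < c p.1 * q p.1 ^ p.2 := mul_pos (hc _) (pow_pos (hq0 _) _)
  unfold weightedNoise
  rw [integral_const_mul, (hasLaw_coord hlaw _ _).integral_eq,
    integral_id_lap hb, mul_zero]

lemma variance_weightedNoise (a : Fin n → ℝ) (p : Fin n × ℕ) :
    Var[weightedNoise a p; P] = a p.1 ^ 2 * 2 * c p.1 ^ 2 * (q p.1 ^ 2) ^ p.2 := by
  have hb : 0 < c p.1 * q p.1 ^ p.2 := mul_pos (hc _) (pow_pos (hq0 _) _)
  unfold weightedNoise
  rw [variance_const_mul, (hasLaw_coord hlaw _ _).variance_eq,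
    variance_id_lap hb]
  ring

variable (hq1 : ∀ i, q i < 1)
include hq1

lemma summable_sqrt_variance_weightedNoise (a : Fin n → ℝ) :
    Summable fun p ↦ √(Var[weightedNoise a p; P]) := by
  have hsq : ∀ p : Fin n × ℕ, a p.1 ^ 2 * 2 * c p.1 ^ 2 * (q p.1 ^ 2) ^ p.2
      = (|a p.1| * √2 * c p.1 * q p.1 ^ p.2) ^ 2 := fun p ↦ by
    rw [show (|a p.1| * √2 * c p.1 * q p.1 ^ p.2) ^ 2
        = |a p.1| ^ 2 * √2 ^ 2 * c p.1 ^ 2 * (q p.1 ^ 2) ^ p.2 by ring,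
      sq_abs, Real.sq_sqrt zero_le_two]
  simp only [variance_weightedNoise hlaw hc hq0, hsq, Real.sqrt_sq_eq_abs]
  refine Summable.abs ?_
  simpa only [mul_assoc] using (hasSum_prod_mul_geometric (fun i ↦ |a i| * √2 * c i)
    (fun i ↦ (hq0 i).le) hq1).summable

lemma hasSum_variance_weightedNoise (a : Fin n → ℝ) :
    HasSum (fun p ↦ Var[weightedNoise a p; P])
      (∑ i, a i ^ 2 * 2 * c i ^ 2 * (1 - q i ^ 2)⁻¹) := by
  simp only [variance_weightedNoise hlaw hc hq0]
  exact hasSum_prod_mul_geometric _ (fun i ↦ sq_nonneg _)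
    fun i ↦ pow_lt_one₀ (hq0 i).le (hq1 i) two_ne_zero

end LaplaceNoise

lemma thetaInf_eq_ave_add_tsum_weightedNoise {n : ℕ} {θ0 s : Fin n → ℝ} {ω : ℕ → Fin n → ℝ}
    (hω : ∀ i, Summable fun j ↦ ω j i)
    (hω' : Summable fun p ↦ weightedNoise (fun i ↦ s i / n) p ω) :
    thetaInf θ0 s ω = ave θ0 + ∑' p, weightedNoise (fun i ↦ s i / n) p ω := by
  rw [thetaInf, if_pos hω, hω'.tsum_prod, tsum_fintype]
  simp only [weightedNoise, tsum_mul_left]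

theorem accuracy_of_consensus_value_general {n : ℕ}
    (s c q : Fin n → ℝ)
    (hc : ∀ i, 0 < c i) (hq : ∀ i, q i ∈ Set.Ioo (|s i - 1|) 1)
    (P : Measure (ℕ → Fin n → ℝ)) [IsProbabilityMeasure P]
    (hlaw : ∀ (k : ℕ) (i : Fin n),
      Measure.map (fun ω : ℕ → Fin n → ℝ => ω k i) P = lap (c i * q i ^ k))
    (hind : iIndepFun
      (fun (p : ℕ × Fin n) (ω : ℕ → Fin n → ℝ) => ω p.1 p.2) P)
    (θ0 : Fin n → ℝ) :
    (∫ ω, thetaInf θ0 s ω ∂P) = ave θ0 ∧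
    variance (fun ω => thetaInf θ0 s ω) P
      = (2 / (n : ℝ) ^ 2) * ∑ i, s i ^ 2 * c i ^ 2 / (1 - q i ^ 2) := by
  have hq0 : ∀ i, 0 < q i := fun i ↦ (abs_nonneg _).trans_lt (hq i).1
  have hq1 : ∀ i, q i < 1 := fun i ↦ (hq i).2
  have hX := memLp_weightedNoise hlaw hc hq0
  have hmean := integral_weightedNoise hlaw hc hq0
  have hσ := summable_sqrt_variance_weightedNoise hlaw hc hq0 hq1
  set w : Fin n → ℝ := fun i ↦ s i / n
  have hθ : (fun ω ↦ thetaInf θ0 s ω) =ᵐ[P] fun ω ↦ ave θ0 + ∑' p, weightedNoise w p ω := by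
    filter_upwards [ae_summable_of_summable_sqrt_variance (hX 1) (hmean 1) (hσ 1),
      ae_summable_of_summable_sqrt_variance (hX w) (hmean w) (hσ w)] with ω hω hω'
    refine thetaInf_eq_ave_add_tsum_weightedNoise (fun i ↦ ?_) hω'
    simpa only [weightedNoise, Pi.one_apply, one_mul] using hω.prod_factor i
  have hS := memLp_tsum (hX w) (hmean w) (hσ w)
  constructor
  · rw [integral_congr_ae hθ, integral_add (integrable_const _) (hS.integrable one_le_two),
      integral_tsum_eq_zero (hX w) (hmean w) (hσ w), integral_const, probReal_univ, one_smul,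
      add_zero]
  · rw [variance_congr hθ, variance_const_add hS.aestronglyMeasurable,
      variance_tsum_eq_tsum_variance (hX w) (hmean w) (hσ w)
        (pairwise_indepFun_weightedNoise hind w),
      (hasSum_variance_weightedNoise hlaw hc hq0 hq1 w).tsum_eq, Finset.mul_sum]
    refine Finset.sum_congr rfl fun i _ ↦ ?_
    simp only [w]
    ring

/-- **Unbiasedness and variance of the consensus value**: `E[θ_∞] = ⟨θ₀⟩` and
`var{θ_∞} = (2/n²) ∑_i s_i² c_i² / (1 - q_i²)`. -/
theorem accuracy_of_consensus_value {n : ℕ} (hn : 0 < n)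
    (A : Matrix (Fin n) (Fin n) ℝ) (hAsymm : A.IsSymm) (hApos : ∀ i j, 0 ≤ A i j)
    (L : Matrix (Fin n) (Fin n) ℝ)
    (hL : L = Matrix.diagonal (fun i => ∑ j, A i j) - A)
    (hconn : ∀ v : Fin n → ℝ, L.mulVec v = 0 → ∃ a : ℝ, v = fun _ => a)
    (h : ℝ) (hh0 : 0 < h)
    (hh1 : h < 1 / Finset.univ.sup'
      (Finset.univ_nonempty_iff.mpr (Fin.pos_iff_nonempty.mp hn)) (fun i => ∑ j, A i j))
    (s c q : Fin n → ℝ) (hs : ∀ i, s i ∈ Set.Ioo (0 : ℝ) 2)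
    (hc : ∀ i, 0 < c i) (hq : ∀ i, q i ∈ Set.Ioo (|s i - 1|) 1)
    (P : Measure (ℕ → Fin n → ℝ)) [IsProbabilityMeasure P]
    (hlaw : ∀ (k : ℕ) (i : Fin n),
      Measure.map (fun ω : ℕ → Fin n → ℝ => ω k i) P = lap (c i * q i ^ k))
    (hind : iIndepFun
      (fun (p : ℕ × Fin n) (ω : ℕ → Fin n → ℝ) => ω p.1 p.2) P)
    (θ0 : Fin n → ℝ) :
    (∫ ω, thetaInf θ0 s ω ∂P) = ave θ0 ∧
    variance (fun ω => thetaInf θ0 s ω) P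
      = (2 / (n : ℝ) ^ 2) * ∑ i, s i ^ 2 * c i ^ 2 / (1 - q i ^ 2) :=
  accuracy_of_consensus_value_general s c q hc hq P hlaw hind θ0
end

section
/- Differential privacy of the algorithm: Under the differentially private Laplacian consensus dynamics with the stated assumptions, let δ > 0 be the adjacency bound and, for each i ∈ {1,…,n}, set ε_i = δ q_i / ( c_i (q_i − |s_i − 1|) ). Then for every i₀ ∈ {1,…,n}, every pair of initial states θ₀⁽¹⁾, θ₀⁽²⁾ that differ only in coordinate i₀ with |θ₀,ᵢ₀⁽²⁾ − θ₀,ᵢ₀⁽¹⁾| ≤ δ, and every Borel set O ⊆ (ℝⁿ)^ℕ, one has P{η : X_{θ₀⁽¹⁾}(η) ∈ O} ≤ e^{ε_{i₀}} · P{η : X_{θ₀⁽²⁾}(η) ∈ O}. Consequently the algorithm is ε-differentially private with ε = max_i ε_i. -/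
/-!
Changing the initial state of agent `i₀` by `d` is undone exactly by adding `-(1 - s_{i₀})ᵏ d`
to the noise of agent `i₀` at time `k`: the state then differs by `(1 - s_{i₀})ᵏ d` in coordinate
`i₀` while every message `x(k)` is unchanged. So the event for `θ₀⁽¹⁾` is the preimage of the
event for `θ₀⁽²⁾` under a deterministic translation of the noise.

Translating `Lap(b)` by `a` multiplies its density by at most `e^{|a|/b}`. By independence the
noise law is the infinite product of the Laplace laws, and the translated product is therefore
bounded by `e^{∑ₖ |aₖ|/bₖ}` times the original one: on cylinder sets this is the finite product
bound, and cylinder sets form an algebra generating the product σ-algebra. Since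
`|aₖ|/bₖ = (|d|/c_{i₀}) (|s_{i₀} - 1|/q_{i₀})ᵏ`, the geometric series gives `ε_{i₀}`.
-/

open MeasureTheory ProbabilityTheory Filter

/-- The map `X_{θ₀}` sending a noise sequence `η` to the resulting sequence of
transmitted messages `x(k) = θ(k) + η(k)`. -/
noncomputable def msgSeq {n : ℕ} (L S : Matrix (Fin n) (Fin n) ℝ) (h : ℝ)
    (θ0 : Fin n → ℝ) (η : ℕ → Fin n → ℝ) : ℕ → Fin n → ℝ :=
  fun k => thetaSeq L S h θ0 η k + η k

open scoped ENNReal NNReal symmDiff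

theorem lap_map_add_le {b : ℝ} (hb : 0 < b) (a : ℝ) :
    (lap b).map (· + a) ≤ (Real.exp (|a| / b)).toNNReal • lap b := by
  set f : ℝ → ℝ≥0∞ := fun x => ENNReal.ofReal ((2 * b)⁻¹ * Real.exp (-|x| / b))
  have hf : Measurable f := by fun_prop
  have hshift (y : ℝ) : f (y - a) ≤ ENNReal.ofReal (Real.exp (|a| / b)) * f y := by
    rw [← ENNReal.ofReal_mul (Real.exp_nonneg _)]
    refine ENNReal.ofReal_le_ofReal ?_
    rw [mul_left_comm, ← Real.exp_add, ← add_div]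
    gcongr
    linarith [abs_sub_abs_le_abs_sub y a]
  refine Measure.le_iff.2 fun A hA => ?_
  rw [Measure.map_apply (measurable_add_const a) hA, Measure.smul_apply, ENNReal.smul_def,
    smul_eq_mul, lap, withDensity_apply _ hA, withDensity_apply _ (measurable_add_const a hA),
    ← lintegral_const_mul _ hf]
  calc ∫⁻ x in (· + a) ⁻¹' A, f x = ∫⁻ y in A, f (y - a) := by
        simpa using (measurePreserving_add_right volume a).setLIntegral_comp_preimage_emb
          (MeasurableEquiv.addRight a).measurableEmbedding (fun y => f (y - a)) A
    _ ≤ ∫⁻ y in A, ENNReal.ofReal (Real.exp (|a| / b)) * f y := lintegral_mono hshift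

namespace MeasureTheory.Measure

theorem tprod_mono {δ : Type*} {X : δ → Type*} [∀ i, MeasurableSpace (X i)]
    {μ ν : ∀ i, Measure (X i)} [∀ i, SigmaFinite (ν i)] (h : ∀ i, μ i ≤ ν i) (l : List δ) :
    Measure.tprod l μ ≤ Measure.tprod l ν := by
  induction l with
  | nil => exact le_rfl
  | cons i l ih => rw [tprod_cons, tprod_cons]; exact prod_mono (h i) ih

theorem pi_mono {ι : Type*} [Fintype ι] {X : ι → Type*} [∀ i, MeasurableSpace (X i)]
    {μ ν : ∀ i, Measure (X i)} [∀ i, SigmaFinite (μ i)] [∀ i, SigmaFinite (ν i)]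
    (h : ∀ i, μ i ≤ ν i) : Measure.pi μ ≤ Measure.pi ν := by
  classical
  have := Fintype.toEncodable ι
  rw [← pi'_eq_pi, ← pi'_eq_pi]
  exact map_mono (tprod_mono h _) (measurable_tProd_elim' _)

theorem pi_smul {ι : Type*} [Fintype ι] {X : ι → Type*} [∀ i, MeasurableSpace (X i)]
    (μ : ∀ i, Measure (X i)) [∀ i, SigmaFinite (μ i)] (c : ι → ℝ≥0) :
    Measure.pi (fun i => c i • μ i) = (∏ i, c i) • Measure.pi μ := by
  refine pi_eq fun s hs => ?_
  simp only [pi_pi, smul_apply, ENNReal.smul_def, smul_eq_mul, ENNReal.ofNNReal_finsetProd,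
    Finset.prod_mul_distrib]

theorem pi_le_smul_pi {ι : Type*} [Fintype ι] {X : ι → Type*} [∀ i, MeasurableSpace (X i)]
    {μ ν : ∀ i, Measure (X i)} [∀ i, SigmaFinite (μ i)] [∀ i, SigmaFinite (ν i)]
    {c : ι → ℝ≥0} (h : ∀ i, ν i ≤ c i • μ i) :
    Measure.pi ν ≤ (∏ i, c i) • Measure.pi μ :=
  pi_smul μ c ▸ pi_mono h

theorem le_of_isSetAlgebra {α : Type*} [m : MeasurableSpace α] {𝒜 : Set (Set α)}
    (h𝒜 : IsSetAlgebra 𝒜) (hgen : m = MeasurableSpace.generateFrom 𝒜)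
    {μ ν : Measure α} [IsFiniteMeasure μ] [IsFiniteMeasure ν] (hle : ∀ s ∈ 𝒜, μ s ≤ ν s) :
    μ ≤ ν := by
  refine le_iff.2 fun s hs => ENNReal.le_of_forall_pos_le_add fun ε hε _ => ?_
  obtain ⟨t, ht, hst⟩ := (MeasureDense.of_generateFrom_isSetAlgebra_finite (μ + ν) h𝒜 hgen).approx
    s hs (measure_ne_top _ _) ε hε
  have hμ : μ s ≤ μ t + μ (s ∆ t) := tsub_le_iff_left.1 le_measure_symmDiff
  have hν : ν t ≤ ν s + ν (s ∆ t) := symmDiff_comm s t ▸ tsub_le_iff_left.1 le_measure_symmDiff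
  calc μ s ≤ ν t + μ (s ∆ t) := hμ.trans (add_le_add_left (hle t ht) _)
    _ ≤ ν s + ν (s ∆ t) + μ (s ∆ t) := add_le_add_left hν _
    _ = ν s + (μ + ν) (s ∆ t) := by rw [add_apply]; ring
    _ ≤ ν s + ε := by grw [hst.le]; simp

theorem infinitePi_le_smul_infinitePi {ι : Type*} {X : ι → Type*} [∀ i, MeasurableSpace (X i)]
    {μ ν : ∀ i, Measure (X i)} [∀ i, IsProbabilityMeasure (μ i)] [∀ i, IsProbabilityMeasure (ν i)]
    {c : ι → ℝ≥0} {C : ℝ≥0} (h : ∀ i, ν i ≤ c i • μ i) (hC : ∀ s : Finset ι, ∏ i ∈ s, c i ≤ C) :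
    infinitePi ν ≤ C • infinitePi μ := by
  refine le_of_isSetAlgebra isSetAlgebra_measurableCylinders
    generateFrom_measurableCylinders.symm fun t ht => ?_
  obtain ⟨s, S, hS, rfl⟩ := (mem_measurableCylinders t).1 ht
  rw [infinitePi_cylinder _ hS, smul_apply, infinitePi_cylinder _ hS]
  calc Measure.pi (fun i : s => ν i) S
      ≤ ((∏ i : s, c i) • Measure.pi (fun i : s => μ i)) S := pi_le_smul_pi (fun i : s => h i) S
    _ ≤ C • Measure.pi (fun i : s => μ i) S := by
      rw [smul_apply, ENNReal.smul_def, ENNReal.smul_def, Finset.prod_coe_sort]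
      gcongr
      exact hC s

theorem map_le_smul_of_semiconj {Ω E : Type*} [MeasurableSpace Ω]
    [MeasurableSpace E] {P : Measure Ω} {X : Ω → E} (hX : MeasurableEmbedding X) {T : Ω → Ω}
    {U : E → E} (hT : Measurable T) (hU : Measurable U) (hTU : Function.Semiconj X T U)
    {C : ℝ≥0} (h : (P.map X).map U ≤ C • P.map X) : P.map T ≤ C • P := by
  refine Measure.le_iff.2 fun s hs => ?_
  have hpre : T ⁻¹' s = X ⁻¹' (U ⁻¹' (X '' s)) := by
    rw [← Set.preimage_comp, ← hTU.comp_eq, Set.preimage_comp, hX.injective.preimage_image]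
  calc P.map T s = (P.map X).map U (X '' s) := by
        rw [map_apply hT hs, hpre, map_apply hU (hX.measurableSet_image.2 hs), hX.map_apply]
    _ ≤ (C • P.map X) (X '' s) := Measure.le_iff'.1 h _
    _ = (C • P) s := by rw [smul_apply, smul_apply, hX.map_apply, hX.injective.preimage_image]

end MeasureTheory.Measure

theorem map_add_le_of_iIndepFun_lap {Ω ι : Type*} [MeasurableSpace Ω] {P : Measure Ω}
    [IsProbabilityMeasure P] {X : ι → Ω → ℝ} (hX : ∀ i, Measurable (X i)) (hind : iIndepFun X P)
    {b : ι → ℝ} (hb : ∀ i, 0 < b i) (hlaw : ∀ i, P.map (X i) = lap (b i)) (a : ι → ℝ) {ε : ℝ}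
    (hε : ∀ s : Finset ι, ∑ i ∈ s, |a i| / b i ≤ ε) :
    (P.map fun ω i => X i ω).map (· + a) ≤ (Real.exp ε).toNNReal • P.map fun ω i => X i ω := by
  have (i : ι) : IsProbabilityMeasure (lap (b i)) :=
    hlaw i ▸ Measure.isProbabilityMeasure_map (hX i).aemeasurable
  have (i : ι) : IsProbabilityMeasure ((lap (b i)).map (· + a i)) :=
    Measure.isProbabilityMeasure_map (measurable_add_const _).aemeasurable
  rw [hind.map_fun_eq_infinitePi_map₀ (measurable_pi_lambda _ hX).aemeasurable]
  simp only [hlaw]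
  rw [show (· + a) = fun (x : ι → ℝ) i => x i + a i from rfl,
    Measure.infinitePi_map_pi _ fun i => measurable_add_const (a i)]
  refine Measure.infinitePi_le_smul_infinitePi (fun i => lap_map_add_le (hb i) (a i)) fun s => ?_
  rw [← Real.toNNReal_prod_of_nonneg fun i _ => (Real.exp_pos _).le, ← Real.exp_sum]
  exact Real.toNNReal_le_toNNReal (Real.exp_le_exp.2 (hε s))

theorem map_add_le_of_iIndepFun_lap_uncurry {ι κ : Type*} {P : Measure (ι → κ → ℝ)}
    [IsProbabilityMeasure P] (hind : iIndepFun (fun (p : ι × κ) ω => ω p.1 p.2) P)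
    {b : ι → κ → ℝ} (hb : ∀ i j, 0 < b i j) (hlaw : ∀ i j, P.map (fun ω => ω i j) = lap (b i j))
    (a : ι → κ → ℝ) {ε : ℝ} (hε : ∀ s : Finset (ι × κ), ∑ p ∈ s, |a p.1 p.2| / b p.1 p.2 ≤ ε) :
    P.map (· + a) ≤ (Real.exp ε).toNNReal • P :=
  Measure.map_le_smul_of_semiconj (MeasurableEquiv.curry ι κ ℝ).symm.measurableEmbedding
    (measurable_add_const a) (measurable_add_const _) (fun _ => rfl)
    (map_add_le_of_iIndepFun_lap (fun p => by fun_prop) hind (fun p => hb p.1 p.2)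
      (fun p => hlaw p.1 p.2) (fun p => a p.1 p.2) hε)

theorem sum_le_of_geometric_column {κ : Type*} [Fintype κ] {f : ℕ → κ → ℝ} {j : κ}
    (hf0 : ∀ k, 0 ≤ f k j) (hf : ∀ k i, i ≠ j → f k i = 0) {A r : ℝ} (hr0 : 0 ≤ r)
    (hr1 : r < 1) (hfj : ∀ k, f k j ≤ A * r ^ k) (t : Finset (ℕ × κ)) :
    ∑ p ∈ t, f p.1 p.2 ≤ A / (1 - r) := by
  have ht : t ⊆ Finset.range (t.sup Prod.fst + 1) ×ˢ Finset.univ := fun p hp => by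
    simpa [Nat.lt_succ_iff] using Finset.le_sup (f := Prod.fst) hp
  have hA : 0 ≤ A := by simpa using (hf0 0).trans (hfj 0)
  calc ∑ p ∈ t, f p.1 p.2 ≤ ∑ p ∈ Finset.range (t.sup Prod.fst + 1) ×ˢ Finset.univ, f p.1 p.2 :=
        Finset.sum_le_sum_of_subset_of_nonneg ht fun ⟨k, i⟩ _ _ => by
          obtain rfl | hi := eq_or_ne i j
          exacts [hf0 k, (hf k i hi).ge]
    _ = ∑ k ∈ Finset.range (t.sup Prod.fst + 1), f k j := by
        rw [Finset.sum_product]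
        exact Finset.sum_congr rfl fun k _ => Fintype.sum_eq_single j fun i hi => hf k i hi
    _ ≤ ∑ k ∈ Finset.range (t.sup Prod.fst + 1), A * r ^ k := Finset.sum_le_sum fun k _ => hfj k
    _ ≤ A / (1 - r) := by
        rw [← Finset.mul_sum, div_eq_mul_one_div]
        gcongr
        have := geom_sum_Ico_le_of_lt_one (m := 0) (n := t.sup Prod.fst + 1) hr0 hr1
        rwa [← Finset.range_eq_Ico, pow_zero] at this

theorem sum_abs_single_div_le {n : ℕ} {c q : Fin n → ℝ} {i0 : Fin n} (hc : 0 < c i0) {ρ : ℝ}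
    (hρ : |ρ| < q i0) (d : ℝ) (t : Finset (ℕ × Fin n)) :
    ∑ p ∈ t, |(Pi.single i0 (ρ ^ p.1 * d) : Fin n → ℝ) p.2| / (c p.2 * q p.2 ^ p.1)
      ≤ |d| * q i0 / (c i0 * (q i0 - |ρ|)) := by
  have hq : 0 < q i0 := (abs_nonneg ρ).trans_lt hρ
  have hA : |d| / c i0 / (1 - |ρ| / q i0) = |d| * q i0 / (c i0 * (q i0 - |ρ|)) := by
    field_simp
  rw [← hA]
  refine sum_le_of_geometric_column
    (f := fun k i => |(Pi.single i0 (ρ ^ k * d) : Fin n → ℝ) i| / (c i * q i ^ k)) (j := i0)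
    (fun k => ?_) (fun k i hi => ?_)
    (div_nonneg (abs_nonneg ρ) hq.le) ((div_lt_one hq).2 hρ) (fun k => ?_) t
  · simp only [Pi.single_eq_same]
    positivity
  · simp [hi]
  · rw [Pi.single_eq_same, abs_mul, abs_pow, div_pow]
    exact (by field_simp : _ = _).le

section Dynamics

variable {n : ℕ} (L S : Matrix (Fin n) (Fin n) ℝ) (h : ℝ) (θ0 : Fin n → ℝ)

theorem measurable_thetaSeq (k : ℕ) : Measurable fun η => thetaSeq L S h θ0 η k := by
  induction k with
  | zero => exact measurable_const
  | succ k ih =>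
    have hmul (M : Matrix (Fin n) (Fin n) ℝ) : Measurable M.mulVec :=
      (Matrix.mulVecLin M).continuous_of_finiteDimensional.measurable
    simp only [thetaSeq]
    fun_prop

theorem measurable_msgSeq : Measurable (msgSeq L S h θ0) :=
  measurable_pi_lambda _ fun k => (measurable_thetaSeq L S h θ0 k).add (measurable_pi_apply k)

variable {L S h θ0}

theorem thetaSeq_add_sub (η : ℕ → Fin n → ℝ) {Δ : ℕ → Fin n → ℝ}
    (hΔ : ∀ k, Δ (k + 1) = Δ k - S.mulVec (Δ k)) (k : ℕ) :
    thetaSeq L S h (θ0 + Δ 0) (η - Δ) k = thetaSeq L S h θ0 η k + Δ k := by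
  induction k with
  | zero => rfl
  | succ k ih =>
    rw [thetaSeq, thetaSeq, ih, hΔ, Pi.sub_apply, add_add_sub_cancel, Matrix.mulVec_sub]
    abel

theorem msgSeq_add_sub (η : ℕ → Fin n → ℝ) {Δ : ℕ → Fin n → ℝ}
    (hΔ : ∀ k, Δ (k + 1) = Δ k - S.mulVec (Δ k)) :
    msgSeq L S h (θ0 + Δ 0) (η - Δ) = msgSeq L S h θ0 η := by
  ext1 k
  rw [msgSeq, msgSeq, thetaSeq_add_sub η hΔ, Pi.sub_apply, add_add_sub_cancel]

theorem msgSeq_diagonal_eq_sub_single (s : Fin n → ℝ) {θ1 θ2 : Fin n → ℝ} {i0 : Fin n}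
    (hadj : ∀ i, i ≠ i0 → θ2 i = θ1 i) (η : ℕ → Fin n → ℝ) :
    msgSeq L (Matrix.diagonal s) h θ1 η = msgSeq L (Matrix.diagonal s) h θ2
      (η - fun k => (Pi.single i0 ((1 - s i0) ^ k * (θ2 i0 - θ1 i0)) : Fin n → ℝ)) := by
  set Δ : ℕ → Fin n → ℝ := fun k => Pi.single i0 ((1 - s i0) ^ k * (θ2 i0 - θ1 i0))
  have hθ : θ1 + Δ 0 = θ2 := by
    ext i
    obtain rfl | hi := eq_or_ne i i0
    · simp [Δ]
    · simp [Δ, hi, hadj i hi]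
  have hΔ (k : ℕ) : Δ (k + 1) = Δ k - (Matrix.diagonal s).mulVec (Δ k) := by
    ext i
    obtain rfl | hi := eq_or_ne i i0
    · simp only [Δ, Pi.single_eq_same, Pi.sub_apply, Matrix.mulVec_diagonal]
      ring
    · simp [Δ, hi]
  rw [← msgSeq_add_sub η hΔ, hθ]

end Dynamics

theorem measure_msgSeq_le_of_adjacent {n : ℕ} (L : Matrix (Fin n) (Fin n) ℝ) (h : ℝ)
    {s c q : Fin n → ℝ} (hc : ∀ i, 0 < c i) (hq : ∀ i, q i ∈ Set.Ioo (|s i - 1|) 1)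
    {P : Measure (ℕ → Fin n → ℝ)} [IsProbabilityMeasure P]
    (hlaw : ∀ k i, P.map (fun ω : ℕ → Fin n → ℝ => ω k i) = lap (c i * q i ^ k))
    (hind : iIndepFun (fun (p : ℕ × Fin n) (ω : ℕ → Fin n → ℝ) => ω p.1 p.2) P)
    {δ : ℝ} {i0 : Fin n} {θ1 θ2 : Fin n → ℝ} (hadj : ∀ i, i ≠ i0 → θ2 i = θ1 i)
    (hδ : |θ2 i0 - θ1 i0| ≤ δ) {O : Set (ℕ → Fin n → ℝ)} (hO : MeasurableSet O) :
    P {η | msgSeq L (Matrix.diagonal s) h θ1 η ∈ O}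
      ≤ ENNReal.ofReal (Real.exp (δ * q i0 / (c i0 * (q i0 - |s i0 - 1|)))) *
        P {η | msgSeq L (Matrix.diagonal s) h θ2 η ∈ O} := by
  set Δ : ℕ → Fin n → ℝ := fun k => Pi.single i0 ((1 - s i0) ^ k * (θ2 i0 - θ1 i0))
  have hpre : {η | msgSeq L (Matrix.diagonal s) h θ1 η ∈ O}
      = (· + -Δ) ⁻¹' {η | msgSeq L (Matrix.diagonal s) h θ2 η ∈ O} := by
    ext η
    simp only [Set.mem_ofPred_eq, Set.mem_preimage, ← sub_eq_add_neg, Δ,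
      msgSeq_diagonal_eq_sub_single s hadj η]
  have hbudget (t : Finset (ℕ × Fin n)) :
      ∑ p ∈ t, |(-Δ) p.1 p.2| / (c p.2 * q p.2 ^ p.1)
        ≤ δ * q i0 / (c i0 * (q i0 - |s i0 - 1|)) := by
    have hρ : |1 - s i0| < q i0 := abs_sub_comm (s i0) 1 ▸ (hq i0).1
    simp only [Pi.neg_apply, abs_neg]
    refine (sum_abs_single_div_le (hc i0) hρ _ t).trans ?_
    rw [abs_sub_comm 1 (s i0)]
    exact div_le_div_of_nonneg_right (mul_le_mul_of_nonneg_right hδ ((abs_nonneg _).trans hρ.le))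
      (mul_pos (hc i0) (sub_pos.2 (hq i0).1)).le
  have hM : MeasurableSet {η | msgSeq L (Matrix.diagonal s) h θ2 η ∈ O} :=
    measurable_msgSeq _ _ _ _ hO
  rw [hpre, ← Measure.map_apply (measurable_add_const _) hM]
  exact Measure.le_iff'.1 (map_add_le_of_iIndepFun_lap_uncurry hind
    (fun k i => mul_pos (hc i) (pow_pos ((abs_nonneg _).trans_lt (hq i).1) k)) hlaw _ hbudget) _

theorem differential_privacy_general {n : ℕ} (hn : 0 < n)
    (L : Matrix (Fin n) (Fin n) ℝ)
    (h : ℝ)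
    (s c q : Fin n → ℝ)
    (hc : ∀ i, 0 < c i) (hq : ∀ i, q i ∈ Set.Ioo (|s i - 1|) 1)
    (P : Measure (ℕ → Fin n → ℝ)) [IsProbabilityMeasure P]
    (hlaw : ∀ (k : ℕ) (i : Fin n),
      Measure.map (fun ω : ℕ → Fin n → ℝ => ω k i) P = lap (c i * q i ^ k))
    (hind : iIndepFun
      (fun (p : ℕ × Fin n) (ω : ℕ → Fin n → ℝ) => ω p.1 p.2) P)
    (δ : ℝ) :
    (∀ i0 : Fin n, ∀ θ1 θ2 : Fin n → ℝ,
      (∀ i, i ≠ i0 → θ2 i = θ1 i) → |θ2 i0 - θ1 i0| ≤ δ →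
      ∀ O : Set (ℕ → Fin n → ℝ), MeasurableSet O →
        P {η | msgSeq L (Matrix.diagonal s) h θ1 η ∈ O}
          ≤ ENNReal.ofReal (Real.exp (δ * q i0 / (c i0 * (q i0 - |s i0 - 1|)))) *
            P {η | msgSeq L (Matrix.diagonal s) h θ2 η ∈ O}) ∧
    (∀ θ1 θ2 : Fin n → ℝ,
      (∃ i0, (∀ i, i ≠ i0 → θ2 i = θ1 i) ∧ |θ2 i0 - θ1 i0| ≤ δ) →
      ∀ O : Set (ℕ → Fin n → ℝ), MeasurableSet O →
        P {η | msgSeq L (Matrix.diagonal s) h θ1 η ∈ O}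
          ≤ ENNReal.ofReal (Real.exp (Finset.univ.sup'
              (Finset.univ_nonempty_iff.mpr (Fin.pos_iff_nonempty.mp hn))
              (fun i => δ * q i / (c i * (q i - |s i - 1|))))) *
            P {η | msgSeq L (Matrix.diagonal s) h θ2 η ∈ O}) := by
  refine ⟨fun i0 θ1 θ2 hadj hδ O hO =>
    measure_msgSeq_le_of_adjacent L h hc hq hlaw hind hadj hδ hO, ?_⟩
  rintro θ1 θ2 ⟨i0, hadj, hδ⟩ O hO
  refine (measure_msgSeq_le_of_adjacent L h hc hq hlaw hind hadj hδ hO).trans ?_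
  gcongr
  exact Finset.le_sup' (fun i => δ * q i / (c i * (q i - |s i - 1|))) (Finset.mem_univ i0)

/-- **Differential privacy of the algorithm**: with `ε_i = δ q_i / (c_i (q_i - |s_i - 1|))`,
for every agent `i₀`, every pair of initial states differing only in coordinate `i₀`
by at most `δ`, and every Borel set `O` of message sequences,
`P{η : X_{θ₀⁽¹⁾}(η) ∈ O} ≤ e^{ε_{i₀}} P{η : X_{θ₀⁽²⁾}(η) ∈ O}`; consequently the
algorithm is `ε`-differentially private with `ε = max_i ε_i`. -/
theorem differential_privacy {n : ℕ} (hn : 0 < n)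
    (A : Matrix (Fin n) (Fin n) ℝ) (hAsymm : A.IsSymm) (hApos : ∀ i j, 0 ≤ A i j)
    (L : Matrix (Fin n) (Fin n) ℝ)
    (hL : L = Matrix.diagonal (fun i => ∑ j, A i j) - A)
    (hconn : ∀ v : Fin n → ℝ, L.mulVec v = 0 → ∃ a : ℝ, v = fun _ => a)
    (h : ℝ) (hh0 : 0 < h)
    (hh1 : h < 1 / Finset.univ.sup'
      (Finset.univ_nonempty_iff.mpr (Fin.pos_iff_nonempty.mp hn)) (fun i => ∑ j, A i j))
    (s c q : Fin n → ℝ) (hs : ∀ i, s i ∈ Set.Ioo (0 : ℝ) 2)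
    (hc : ∀ i, 0 < c i) (hq : ∀ i, q i ∈ Set.Ioo (|s i - 1|) 1)
    (P : Measure (ℕ → Fin n → ℝ)) [IsProbabilityMeasure P]
    (hlaw : ∀ (k : ℕ) (i : Fin n),
      Measure.map (fun ω : ℕ → Fin n → ℝ => ω k i) P = lap (c i * q i ^ k))
    (hind : iIndepFun
      (fun (p : ℕ × Fin n) (ω : ℕ → Fin n → ℝ) => ω p.1 p.2) P)
    (δ : ℝ) (hδ : 0 < δ) :
    (∀ i0 : Fin n, ∀ θ1 θ2 : Fin n → ℝ,
      (∀ i, i ≠ i0 → θ2 i = θ1 i) → |θ2 i0 - θ1 i0| ≤ δ →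
      ∀ O : Set (ℕ → Fin n → ℝ), MeasurableSet O →
        P {η | msgSeq L (Matrix.diagonal s) h θ1 η ∈ O}
          ≤ ENNReal.ofReal (Real.exp (δ * q i0 / (c i0 * (q i0 - |s i0 - 1|)))) *
            P {η | msgSeq L (Matrix.diagonal s) h θ2 η ∈ O}) ∧
    (∀ θ1 θ2 : Fin n → ℝ,
      (∃ i0, (∀ i, i ≠ i0 → θ2 i = θ1 i) ∧ |θ2 i0 - θ1 i0| ≤ δ) →
      ∀ O : Set (ℕ → Fin n → ℝ), MeasurableSet O →
        P {η | msgSeq L (Matrix.diagonal s) h θ1 η ∈ O}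
          ≤ ENNReal.ofReal (Real.exp (Finset.univ.sup'
              (Finset.univ_nonempty_iff.mpr (Fin.pos_iff_nonempty.mp hn))
              (fun i => δ * q i / (c i * (q i - |s i - 1|))))) *
            P {η | msgSeq L (Matrix.diagonal s) h θ2 η ∈ O}) :=
  differential_privacy_general hn L h s c q hc hq P hlaw hind δ
end

section
/- Differential privacy of one-shot perturbation: Consider the Laplacian consensus dynamics with S = I_n (all s_i = 1) and noise injected only at time k = 0, i.e., θ(k+1) = θ(k) − h L x(k) + S η(k), x(k) = θ(k) + η(k), where η_i(0) ~ Lap(c_i) with c_i > 0 independent across agents and η(k) = 0 for all k ≥ 1, and 0 < h < 1/d_max. Then for each i ∈ {1,…,n} this algorithm preserves ε_i-differential privacy of agent i's initial state with ε_i = δ/c_i: for every pair of initial states differing only in coordinate i by at most δ and every Borel set O ⊆ (ℝⁿ)^ℕ, P{η : X_{θ₀⁽¹⁾}(η) ∈ O} ≤ e^{δ/c_i} · P{η : X_{θ₀⁽²⁾}(η) ∈ O}. -/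
open MeasureTheory ProbabilityTheory Filter

open scoped ENNReal

/-! With `S = I` the noise injected at time `0` is absorbed into the state, so the whole message
sequence is the noiseless trajectory started from the first message `x(0) = θ₀ + η(0)`, a
measurable function of it. It therefore suffices to compare the laws of `θ₀ + η(0)` for the two
initial states. These have product Laplace densities which agree in every coordinate but `i`,
and there the ratio of the two densities is at most
`exp (|θ₀⁽¹⁾ᵢ - θ₀⁽²⁾ᵢ| / cᵢ) ≤ exp (δ / cᵢ)`. -/

namespace MeasureTheory

variable {α : Type*} [MeasurableSpace α]

theorem lintegral_fin_nat_prod_eq_prod {n : ℕ} {μ : Fin n → Measure α} [∀ i, SigmaFinite (μ i)]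
    {f : Fin n → α → ℝ≥0∞} (hf : ∀ i, Measurable (f i)) :
    ∫⁻ x : Fin n → α, ∏ i, f i (x i) ∂(Measure.pi μ) = ∏ i, ∫⁻ x, f i x ∂(μ i) := by
  induction n with
  | zero => simp
  | succ n ih =>
    calc
      _ = ∫⁻ x : α × (Fin n → α), f 0 x.1 * ∏ i : Fin n, f i.succ (x.2 i)
            ∂((μ 0).prod (Measure.pi fun i ↦ μ i.succ)) := by
          rw [← ((measurePreserving_piFinSuccAbove μ 0).symm).lintegral_comp_emb
            (MeasurableEquiv.measurableEmbedding _)]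
          simp [MeasurableEquiv.piFinSuccAbove_symm_apply, Fin.insertNthEquiv,
            Fin.prod_univ_succ]
      _ = (∫⁻ x, f 0 x ∂μ 0) * ∏ i : Fin n, ∫⁻ x, f i.succ x ∂(μ i.succ) := by
          rw [← ih fun i => hf i.succ, ← lintegral_prod_mul (hf 0).aemeasurable
            (Finset.measurable_prod _ fun i _ =>
              (hf i.succ).comp (measurable_pi_apply i)).aemeasurable]
      _ = ∏ i, ∫⁻ x, f i x ∂(μ i) := (Fin.prod_univ_succ fun i => ∫⁻ x, f i x ∂(μ i)).symm

theorem Measure.pi_withDensity {n : ℕ} {μ : Fin n → Measure α} [∀ i, SigmaFinite (μ i)]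
    {f : Fin n → α → ℝ≥0∞} (hf : ∀ i, Measurable (f i))
    [∀ i, SigmaFinite ((μ i).withDensity (f i))] :
    Measure.pi (fun i => (μ i).withDensity (f i))
      = (Measure.pi μ).withDensity (fun x => ∏ i, f i (x i)) := by
  refine Measure.pi_eq fun s hs => ?_
  have hbox : (Set.univ.pi s).indicator (fun x => ∏ i, f i (x i))
      = fun x => ∏ i, (s i).indicator (f i) (x i) := by
    ext x
    by_cases hx : x ∈ Set.univ.pi s
    · rw [Set.indicator_of_mem hx]
      exact Finset.prod_congr rfl fun i _ => (Set.indicator_of_mem (hx i trivial) _).symm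
    · obtain ⟨i, -, hi⟩ := not_forall₂.1 hx
      rw [Set.indicator_of_notMem hx]
      exact (Finset.prod_eq_zero (Finset.mem_univ i) (Set.indicator_of_notMem hi _)).symm
  rw [withDensity_apply _ (.univ_pi hs), ← lintegral_indicator (.univ_pi hs), hbox,
    lintegral_fin_nat_prod_eq_prod fun i => (hf i).indicator (hs i)]
  exact Finset.prod_congr rfl fun i _ => by
    rw [lintegral_indicator (hs i), withDensity_apply _ (hs i)]

theorem Measure.map_add_left_withDensity {G : Type*} [MeasurableSpace G] [AddGroup G]
    [MeasurableAdd G] (μ : Measure G) [μ.IsAddLeftInvariant] (f : G → ℝ≥0∞) (g : G) :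
    (μ.withDensity f).map (g + ·) = μ.withDensity fun x => f (-g + x) := by
  ext s hs
  rw [Measure.map_apply (measurable_const_add g) hs, withDensity_apply _ hs,
    withDensity_apply _ (measurable_const_add g hs),
    ← (measurePreserving_add_left μ g).setLIntegral_comp_preimage_emb
      (measurableEmbedding_addLeft g) (fun x => f (-g + x))]
  simp only [neg_add_cancel_left]

end MeasureTheory

noncomputable def lapPDF (b x : ℝ) : ℝ≥0∞ :=
  ENNReal.ofReal ((2 * b)⁻¹ * Real.exp (-|x| / b))

theorem lap_eq_withDensity (b : ℝ) : lap b = volume.withDensity (lapPDF b) := rfl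

theorem measurable_lapPDF (b : ℝ) : Measurable (lapPDF b) := by
  unfold lapPDF; fun_prop

instance sigmaFinite_withDensity_lapPDF (b : ℝ) : SigmaFinite (volume.withDensity (lapPDF b)) :=
  SigmaFinite.withDensity_ofReal _

theorem lapPDF_le_mul {b : ℝ} (hb : 0 < b) (x y : ℝ) :
    lapPDF b x ≤ ENNReal.ofReal (Real.exp (|x - y| / b)) * lapPDF b y := by
  rw [lapPDF, lapPDF, ← ENNReal.ofReal_mul (Real.exp_nonneg _), mul_left_comm, ← Real.exp_add,
    ← add_div]
  gcongr
  linarith [abs_sub_abs_le_abs_sub y x, abs_sub_comm x y]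

noncomputable def laplaceMechanism {n : ℕ} (c θ : Fin n → ℝ) : Measure (Fin n → ℝ) :=
  (Measure.pi fun i => lap (c i)).map (θ + ·)

theorem laplaceMechanism_eq_withDensity {n : ℕ} (c θ : Fin n → ℝ) :
    laplaceMechanism c θ = volume.withDensity fun x => ∏ i, lapPDF (c i) (x i - θ i) := by
  simp_rw [laplaceMechanism, lap_eq_withDensity,
    Measure.pi_withDensity fun i => measurable_lapPDF (c i), ← volume_pi,
    Measure.map_add_left_withDensity, neg_add_eq_sub, Pi.sub_apply]

theorem laplaceMechanism_le_smul {n : ℕ} {c : Fin n → ℝ} {θ₁ θ₂ : Fin n → ℝ} {i₀ : Fin n} {δ : ℝ}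
    (hc : 0 < c i₀) (hθ : ∀ i, i ≠ i₀ → θ₂ i = θ₁ i) (hδ : |θ₂ i₀ - θ₁ i₀| ≤ δ) :
    laplaceMechanism c θ₁ ≤ ENNReal.ofReal (Real.exp (δ / c i₀)) • laplaceMechanism c θ₂ := by
  rw [laplaceMechanism_eq_withDensity, laplaceMechanism_eq_withDensity,
    ← withDensity_smul' _ _ ENNReal.ofReal_ne_top]
  refine withDensity_mono (.of_forall fun x => ?_)
  simp only [Pi.smul_apply, smul_eq_mul, ← Finset.mul_prod_erase _ _ (Finset.mem_univ i₀)]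
  have hrest : ∏ i ∈ Finset.univ.erase i₀, lapPDF (c i) (x i - θ₁ i)
      = ∏ i ∈ Finset.univ.erase i₀, lapPDF (c i) (x i - θ₂ i) :=
    Finset.prod_congr rfl fun i hi => by rw [hθ i (Finset.ne_of_mem_erase hi)]
  rw [hrest, ← mul_assoc]
  gcongr
  calc lapPDF (c i₀) (x i₀ - θ₁ i₀)
      ≤ ENNReal.ofReal (Real.exp (|θ₂ i₀ - θ₁ i₀| / c i₀)) * lapPDF (c i₀) (x i₀ - θ₂ i₀) := by
        simpa using lapPDF_le_mul hc (x i₀ - θ₁ i₀) (x i₀ - θ₂ i₀)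
    _ ≤ _ := by gcongr

section Dynamics

variable {n : ℕ} (L : Matrix (Fin n) (Fin n) ℝ) (h : ℝ)

theorem continuous_thetaSeq (S : Matrix (Fin n) (Fin n) ℝ) (η : ℕ → Fin n → ℝ) (k : ℕ) :
    Continuous fun θ => thetaSeq L S h θ η k := by
  induction k with
  | zero => exact continuous_id
  | succ k ih => simp only [thetaSeq]; fun_prop

theorem measurable_msgSeq_s11 (S : Matrix (Fin n) (Fin n) ℝ) (η : ℕ → Fin n → ℝ) :
    Measurable fun θ => msgSeq L S h θ η :=
  measurable_pi_lambda _ fun k => ((continuous_thetaSeq L h S η k).add continuous_const).measurable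

theorem msgSeq_eq_msgSeq_zero {θ : Fin n → ℝ} {η : ℕ → Fin n → ℝ} (hη : ∀ k, η (k + 1) = 0) :
    msgSeq L 1 h θ η = msgSeq L 1 h (θ + η 0) 0 := by
  funext k
  induction k with
  | zero => simp [msgSeq, thetaSeq]
  | succ k ih =>
    simp only [msgSeq, thetaSeq, hη, Matrix.one_mulVec, Pi.zero_apply, add_zero] at ih ⊢
    rw [← ih]
    abel

theorem measure_msgSeq_mem_eq {P : Measure (ℕ → Fin n → ℝ)} (hP : ∀ᵐ η ∂P, ∀ k, η (k + 1) = 0)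
    (θ : Fin n → ℝ) {O : Set (ℕ → Fin n → ℝ)} (hO : MeasurableSet O) :
    P {η | msgSeq L 1 h θ η ∈ O}
      = (P.map (· 0)).map (θ + ·) ((fun v => msgSeq L 1 h v 0) ⁻¹' O) := by
  have hpre : {η | msgSeq L 1 h θ η ∈ O} =ᵐ[P]
      (fun η => θ + η 0) ⁻¹' ((fun v => msgSeq L 1 h v 0) ⁻¹' O) := by
    refine Filter.eventuallyEq_set.2 ?_
    filter_upwards [hP] with η hη
    rw [msgSeq_eq_msgSeq_zero L h hη]
    rfl
  rw [measure_congr hpre, Measure.map_map (measurable_const_add θ) (measurable_pi_apply 0),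
    Measure.map_apply ((measurable_const_add θ).comp (measurable_pi_apply 0))
      (measurable_msgSeq_s11 L h 1 0 hO)]
  rfl

end Dynamics

theorem one_shot_differential_privacy_general {n : ℕ}
    (L : Matrix (Fin n) (Fin n) ℝ)
    (h : ℝ)
    (c : Fin n → ℝ) (hc : ∀ i, 0 < c i)
    (P : Measure (ℕ → Fin n → ℝ)) [IsProbabilityMeasure P]
    (hlaw0 : ∀ i : Fin n,
      Measure.map (fun ω : ℕ → Fin n → ℝ => ω 0 i) P = lap (c i))
    (hzero : ∀ k : ℕ, 1 ≤ k →
      Measure.map (fun ω : ℕ → Fin n → ℝ => ω k) P = Measure.dirac 0)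
    (hind : iIndepFun
      (fun i (ω : ℕ → Fin n → ℝ) => ω 0 i) P)
    (δ : ℝ) :
    ∀ i0 : Fin n, ∀ θ1 θ2 : Fin n → ℝ,
      (∀ i, i ≠ i0 → θ2 i = θ1 i) → |θ2 i0 - θ1 i0| ≤ δ →
      ∀ O : Set (ℕ → Fin n → ℝ), MeasurableSet O →
        P {η | msgSeq L 1 h θ1 η ∈ O}
          ≤ ENNReal.ofReal (Real.exp (δ / c i0)) *
            P {η | msgSeq L 1 h θ2 η ∈ O} := by
  intro i0 θ1 θ2 hθ hdiff O hO
  have hlaw : P.map (fun ω : ℕ → Fin n → ℝ => ω 0) = Measure.pi fun i => lap (c i) := by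
    simp_rw [← hlaw0]
    exact (iIndepFun_iff_map_fun_eq_pi_map fun i =>
      ((measurable_pi_apply i).comp (measurable_pi_apply 0)).aemeasurable).1 hind
  have hone_shot : ∀ᵐ η ∂P, ∀ k, η (k + 1) = 0 := ae_all_iff.2 fun k => by
    refine ae_of_ae_map (p := (· = 0)) (measurable_pi_apply (k + 1)).aemeasurable ?_
    rw [hzero (k + 1) k.succ_pos, ae_dirac_eq]
    rfl
  rw [measure_msgSeq_mem_eq L h hone_shot θ1 hO, measure_msgSeq_mem_eq L h hone_shot θ2 hO, hlaw]
  exact Measure.le_iff'.1 (laplaceMechanism_le_smul (hc i0) hθ hdiff) _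

/-- **Differential privacy of one-shot perturbation**: with `S = I_n`, noise
`η_i(0) ~ Lap(c_i)` independent across agents and `η(k) = 0` for `k ≥ 1`, the
algorithm preserves `ε_i`-differential privacy of agent `i`'s initial state with
`ε_i = δ / c_i`. -/
theorem one_shot_differential_privacy {n : ℕ} (hn : 0 < n)
    (A : Matrix (Fin n) (Fin n) ℝ) (hAsymm : A.IsSymm) (hApos : ∀ i j, 0 ≤ A i j)
    (L : Matrix (Fin n) (Fin n) ℝ)
    (hL : L = Matrix.diagonal (fun i => ∑ j, A i j) - A)
    (hconn : ∀ v : Fin n → ℝ, L.mulVec v = 0 → ∃ a : ℝ, v = fun _ => a)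
    (h : ℝ) (hh0 : 0 < h)
    (hh1 : h < 1 / Finset.univ.sup'
      (Finset.univ_nonempty_iff.mpr (Fin.pos_iff_nonempty.mp hn)) (fun i => ∑ j, A i j))
    (c : Fin n → ℝ) (hc : ∀ i, 0 < c i)
    (P : Measure (ℕ → Fin n → ℝ)) [IsProbabilityMeasure P]
    (hlaw0 : ∀ i : Fin n,
      Measure.map (fun ω : ℕ → Fin n → ℝ => ω 0 i) P = lap (c i))
    (hzero : ∀ k : ℕ, 1 ≤ k →
      Measure.map (fun ω : ℕ → Fin n → ℝ => ω k) P = Measure.dirac 0)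
    (hind : iIndepFun
      (fun i (ω : ℕ → Fin n → ℝ) => ω 0 i) P)
    (δ : ℝ) (hδ : 0 < δ) :
    ∀ i0 : Fin n, ∀ θ1 θ2 : Fin n → ℝ,
      (∀ i, i ≠ i0 → θ2 i = θ1 i) → |θ2 i0 - θ1 i0| ≤ δ →
      ∀ O : Set (ℕ → Fin n → ℝ), MeasurableSet O →
        P {η | msgSeq L 1 h θ1 η ∈ O}
          ≤ ENNReal.ofReal (Real.exp (δ / c i0)) *
            P {η | msgSeq L 1 h θ2 η ∈ O} :=
  one_shot_differential_privacy_general L h c hc P hlaw0 hzero hind δ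
end

section
/- Lower bound on the normalized local cost: Define φ : (0,1) × (0,2) → ℝ by φ(α, s) = s² (α + (1−α)|s−1|)² / ( α² (1 − |s−1|)² [ 1 − (α + (1−α)|s−1|)² ] ). Then φ(α, s) > 1 for every (α, s) ∈ (0,1) × (0,2). -/
open Filter

/-- The normalized local variance cost
`φ(α, s) = s² (α + (1-α)|s-1|)² / (α² (1 - |s-1|)² [1 - (α + (1-α)|s-1|)²])`. -/
noncomputable def phi (α s : ℝ) : ℝ :=
  s ^ 2 * (α + (1 - α) * |s - 1|) ^ 2 /
    (α ^ 2 * (1 - |s - 1|) ^ 2 * (1 - (α + (1 - α) * |s - 1|) ^ 2))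

/-- **Lower bound on the normalized local cost**: `φ(α, s) > 1` for every
`(α, s) ∈ (0,1) × (0,2)`. -/
theorem phi_gt_one :
    ∀ α s : ℝ, α ∈ Set.Ioo (0 : ℝ) 1 → s ∈ Set.Ioo (0 : ℝ) 2 → 1 < phi α s := by
  rintro α s ⟨hα0, hα1⟩ ⟨hs0, hs2⟩
  rw [phi]
  have hb0 : 0 ≤ |s - 1| := abs_nonneg _
  have hb1 : |s - 1| < 1 := abs_sub_lt_iff.mpr ⟨by linarith, by linarith⟩
  have hsge : 1 - |s - 1| ≤ s := by
    rcases abs_cases (s - 1) with ⟨h, _⟩ | ⟨h, _⟩ <;> rw [h] <;> linarith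
  set b := |s - 1| with hb
  set q := α + (1 - α) * b with hq
  have hq0 : 0 < q := by nlinarith
  have hq1 : q < 1 := by nlinarith
  have hqα : α ≤ q := by nlinarith
  have h1b : (0:ℝ) < 1 - b := by linarith
  have hden : 0 < α ^ 2 * (1 - b) ^ 2 * (1 - q ^ 2) := by
    apply mul_pos (mul_pos (pow_pos hα0 2) (pow_pos h1b 2))
    nlinarith
  rw [one_lt_div hden]
  have h1 : α ^ 2 * (1 - b) ^ 2 * (1 - q ^ 2) < α ^ 2 * (1 - b) ^ 2 := by
    nlinarith [mul_pos (mul_pos (pow_pos hα0 2) (pow_pos h1b 2)) (pow_pos hq0 2)]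
  have key : α * (1 - b) ≤ q * s :=
    mul_le_mul hqα hsge (le_of_lt h1b) (le_of_lt hq0)
  have h2 : α ^ 2 * (1 - b) ^ 2 ≤ s ^ 2 * q ^ 2 := by
    nlinarith [key, mul_pos hα0 h1b, mul_pos hq0 hs0]
  linarith
end
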